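/- arXiv:1207.2508 — 7 statements merged into one kernel-verified Lean document; each statement's English description precedes it below -/
import Mathlib

section
/- Let f be a C¹-diffeomorphism of S¹ with irrational rotation number and let {x, f(x), …, fⁿ(x)} be an adapted orbit segment with initial basic interval [a,b] and final basic interval [c,d]. Then the open intervals (f(c), f(d)) and (f⁻¹(a), f⁻¹(b)) are disjoint from the orbit segment {x, f(x), …, fⁿ(x)}. -/
open Set Filter

/-- `inArc a w b` : the point `w` (mod 1) lies strictly inside the positively oriented
open arc of the circle `ℝ/ℤ` from `a` (mod 1) to `b` (mod 1). -/
def inArc (a w b : ℝ) : Prop :=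
  0 < Int.fract (w - a) ∧ Int.fract (w - a) < Int.fract (b - a)

/-- A lift of an orientation-preserving `C¹`-diffeomorphism of the circle `S¹ = ℝ/ℤ`:
a `C¹` map `F : ℝ → ℝ` with `F (x+1) = F x + 1` and `F' > 0` everywhere. -/
structure CircleDiffeo where
  toFun : ℝ → ℝ
  contDiff : ContDiff ℝ 1 toFun
  deriv_pos : ∀ x : ℝ, 0 < deriv toFun x
  commute_translation : ∀ x : ℝ, toFun (x + 1) = toFun x + 1

/-- `f` has rotation number (a lift of) `α`. -/
def hasRotationNumber (f : CircleDiffeo) (α : ℝ) : Prop :=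
  Tendsto (fun n : ℕ => f.toFun^[n] 0 / (n : ℝ)) atTop (nhds α)

/-- The `C¹`-distance between (lifts of) circle maps : sup distance between the maps
plus sup distance between the derivatives (computed over a fundamental domain). -/
noncomputable def distC1 (f g : ℝ → ℝ) : ℝ :=
  (⨆ x : Icc (0:ℝ) 1, |f x.1 - g x.1|) + (⨆ x : Icc (0:ℝ) 1, |deriv f x.1 - deriv g x.1|)

/-- The orbit segment `x, F x, …, F^[n] x` is *adapted*, with final basic interval
`[F^[i] x, F^[j] x]` and initial basic interval `[F^[n-j] x, F^[n-i] x]` (all viewed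
on the circle `ℝ/ℤ`). -/
structure IsAdaptedSeg (F : ℝ → ℝ) (x : ℝ) (n i j : ℕ) : Prop where
  hi1 : 1 ≤ i
  hi2 : i ≤ n - 1
  hj1 : 1 ≤ j
  hj2 : j ≤ n - 1
  x_mem : inArc (F^[n - j] x) x (F^[n - i] x)
  x_only : ∀ k ≤ n, inArc (F^[n - j] x) (F^[k] x) (F^[n - i] x) → Int.fract (F^[k] x - x) = 0
  fn_mem : inArc (F^[i] x) (F^[n] x) (F^[j] x)
  fn_only : ∀ k ≤ n, inArc (F^[i] x) (F^[k] x) (F^[j] x) → Int.fract (F^[k] x - F^[n] x) = 0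
  adapted : i + j ≠ n - 1

/-- The initial ratio `R₀ = ℓ([a,x])/ℓ([x,b])` of an adapted orbit segment,
where `a = F^[n-j] x` and `b = F^[n-i] x`. -/
noncomputable def initialRatio (F : ℝ → ℝ) (x : ℝ) (n i j : ℕ) : ℝ :=
  Int.fract (x - F^[n - j] x) / Int.fract (F^[n - i] x - x)

/-- The final ratio `Rₙ = ℓ([c,Fⁿx])/ℓ([Fⁿx,d])` of an adapted orbit segment,
where `c = F^[i] x` and `d = F^[j] x`. -/
noncomputable def finalRatio (F : ℝ → ℝ) (x : ℝ) (n i j : ℕ) : ℝ :=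
  Int.fract (F^[n] x - F^[i] x) / Int.fract (F^[j] x - F^[n] x)

/-- Two finite sequences of points of the circle are similarly ordered: some
orientation-preserving circle homeomorphism (given by its lift `φ`) maps one to the other. -/
def SimilarlyOrdered (p q : ℕ → ℝ) (n : ℕ) : Prop :=
  ∃ φ : ℝ → ℝ, Continuous φ ∧ StrictMono φ ∧ (∀ z : ℝ, φ (z + 1) = φ z + 1) ∧
    ∀ k ≤ n, Int.fract (φ (p k) - q k) = 0

/-- The (closed) circle arc from `u` to `v` contains no point of the orbit segment
`x, …, F^[n] x` in its interior: it is contained in the closure of a connected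
component of the complement of the orbit segment. -/
def NoSegPointInside (F : ℝ → ℝ) (x : ℝ) (n : ℕ) (u v : ℝ) : Prop :=
  ∀ k ≤ n, ¬ inArc u (F^[k] x) v

/-! ### Auxiliary lemmas -/

/-- The difference of two points mod 1 can be computed from their fractional
parts relative to any base point. -/
lemma fract_shift (p q x : ℝ) :
    Int.fract (p - q) = Int.fract (Int.fract (p - x) - Int.fract (q - x)) := by
  rw [Int.fract_eq_fract]
  refine ⟨⌊p - x⌋ - ⌊q - x⌋, ?_⟩
  have h1 := Int.self_sub_fract (p - x)
  have h2 := Int.self_sub_fract (q - x)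
  push_cast
  linarith

lemma inArc_shift (x a w b : ℝ) :
    inArc a w b ↔ inArc (Int.fract (a - x)) (Int.fract (w - x)) (Int.fract (b - x)) := by
  unfold inArc
  rw [← fract_shift w a x, ← fract_shift b a x]

/-- Reversing the orientation of the circle exchanges the endpoints of arcs. -/
lemma inArc_neg_mp {a w b : ℝ} (h : inArc a w b) : inArc (-b) (-w) (-a) := by
  obtain ⟨h1, h2⟩ := h
  have hL1 : Int.fract (b - a) < 1 := Int.fract_lt_one _
  have key : Int.fract (-w - -b) = Int.fract (b - a) - Int.fract (w - a) := by
    rw [show -w - -b = b - w by ring, fract_shift b w a]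
    exact Int.fract_eq_self.2 ⟨by linarith, by linarith⟩
  have key2 : Int.fract (-a - -b) = Int.fract (b - a) := by
    rw [show -a - -b = b - a by ring]
  exact ⟨by rw [key]; linarith, by rw [key, key2]; linarith⟩

/-- Geometric lemma, normalized version: all points in `[0,1)`, distinguished point `0`. -/
lemma geom0 {A B U V : ℝ} (hA : 0 ≤ A) (hA1 : A < 1) (hU : 0 ≤ U) (hU1 : U < 1)
    (h1 : inArc A 0 B) (h2 : inArc U 0 V)
    (h3 : ¬ inArc A U B) (h4 : ¬ inArc U A V) : U = A := by
  obtain ⟨h11, h12⟩ := h1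
  obtain ⟨h21, h22⟩ := h2
  have hA0 : A ≠ 0 := by
    rintro rfl; simp [Int.fract_zero] at h11
  have hU0 : U ≠ 0 := by
    rintro rfl; simp [Int.fract_zero] at h21
  have hfA : Int.fract (0 - A) = 1 - A := by
    rw [zero_sub, Int.fract_neg (by rwa [Int.fract_eq_self.2 ⟨hA, hA1⟩]),
      Int.fract_eq_self.2 ⟨hA, hA1⟩]
  have hfU : Int.fract (0 - U) = 1 - U := by
    rw [zero_sub, Int.fract_neg (by rwa [Int.fract_eq_self.2 ⟨hU, hU1⟩]),
      Int.fract_eq_self.2 ⟨hU, hU1⟩]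
  rw [hfA] at h12
  rw [hfU] at h22
  rcases lt_trichotomy U A with hlt | heq | hgt
  · exfalso
    refine h4 ⟨?_, ?_⟩
    · rw [Int.fract_eq_self.2 ⟨by linarith, by linarith⟩]; linarith
    · rw [Int.fract_eq_self.2 ⟨by linarith, by linarith⟩]; linarith
  · exact heq
  · exfalso
    refine h3 ⟨?_, ?_⟩
    · rw [Int.fract_eq_self.2 ⟨by linarith, by linarith⟩]; linarith
    · rw [Int.fract_eq_self.2 ⟨by linarith, by linarith⟩]; linarith

/-- Geometric lemma: if `x` lies in both open arcs `(a,b)` and `(u,v)`, while `u ∉ (a,b)`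
and `a ∉ (u,v)`, then `u = a` on the circle. -/
lemma geom {x a b u v : ℝ} (h1 : inArc a x b) (h2 : inArc u x v)
    (h3 : ¬ inArc a u b) (h4 : ¬ inArc u a v) : Int.fract (u - a) = 0 := by
  have hxx : Int.fract (x - x) = 0 := by simp
  have h1' := (inArc_shift x a x b).1 h1
  have h2' := (inArc_shift x u x v).1 h2
  rw [hxx] at h1' h2'
  have h3' : ¬ inArc (Int.fract (a - x)) (Int.fract (u - x)) (Int.fract (b - x)) :=
    fun hC => h3 ((inArc_shift x a u b).2 hC)
  have h4' : ¬ inArc (Int.fract (u - x)) (Int.fract (a - x)) (Int.fract (v - x)) :=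
    fun hC => h4 ((inArc_shift x u a v).2 hC)
  have hUA : Int.fract (u - x) = Int.fract (a - x) :=
    geom0 (Int.fract_nonneg _) (Int.fract_lt_one _) (Int.fract_nonneg _) (Int.fract_lt_one _)
      h1' h2' h3' h4'
  rw [fract_shift u a x, hUA, sub_self, Int.fract_zero]

/-- The associated `CircleDeg1Lift`. -/
def CircleDiffeo.toLift (f : CircleDiffeo) : CircleDeg1Lift :=
  ⟨⟨f.toFun, (strictMono_of_deriv_pos f.deriv_pos).monotone⟩, f.commute_translation⟩

lemma CircleDiffeo.toLift_coe (f : CircleDiffeo) : ⇑f.toLift = f.toFun := rfl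

lemma CircleDiffeo.map_add_int (f : CircleDiffeo) (y : ℝ) (m : ℤ) :
    f.toFun (y + m) = f.toFun y + m :=
  f.toLift.map_add_int y m

/-- A circle diffeo with irrational rotation number has no periodic points:
two iterates of a point agreeing mod 1 have equal indices. -/
lemma no_periodic (α : ℝ) (hα : Irrational α) (f : CircleDiffeo)
    (hf : hasRotationNumber f α) (y : ℝ) :
    ∀ p q : ℕ, Int.fract (f.toFun^[p] y - f.toFun^[q] y) = 0 → p = q := by
  have hτ : f.toLift.translationNumber = α := by
    refine tendsto_nhds_unique ?_ hf
    have h0 := f.toLift.tendsto_translation_number₀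
    refine h0.congr fun m => ?_
    rw [CircleDeg1Lift.coe_pow, CircleDiffeo.toLift_coe]
  have key : ∀ p q : ℕ, q < p → Int.fract (f.toFun^[p] y - f.toFun^[q] y) = 0 → False := by
    intro p q hqp h
    set t := f.toFun^[p] y - f.toFun^[q] y with ht
    have htm : t = (⌊t⌋ : ℝ) := by
      have := Int.self_sub_fract t
      rw [h] at this
      linarith
    set r := p - q with hr
    have hz : (f.toLift ^ r) (f.toFun^[q] y) = f.toFun^[q] y + (⌊t⌋ : ℝ) := by
      rw [CircleDeg1Lift.coe_pow, CircleDiffeo.toLift_coe, ← Function.iterate_add_apply]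
      have : r + q = p := by omega
      rw [this]
      linarith [htm]
    have hrat := f.toLift.translationNumber_of_map_pow_eq_add_int hz (by omega)
    rw [hτ] at hrat
    exact hα ⟨(⌊t⌋ : ℚ) / (r : ℚ), by push_cast; rw [← hrat]⟩
  intro p q h
  rcases lt_trichotomy p q with hlt | heq | hgt
  · exfalso
    refine key q p hlt ?_
    set t := f.toFun^[p] y - f.toFun^[q] y with ht
    have htm : t = (⌊t⌋ : ℝ) := by
      have := Int.self_sub_fract t
      rw [h] at this
      linarith
    have : f.toFun^[q] y - f.toFun^[p] y = ((-⌊t⌋ : ℤ) : ℝ) := by push_cast; linarith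
    rw [this, Int.fract_intCast]
  · exact heq
  · exact absurd h (by intro hh; exact key p q hgt hh)

lemma key_fract {F : ℝ → ℝ} (hmono : StrictMono F)
    (hint : ∀ (y : ℝ) (m : ℤ), F (y + m) = F y + m) (a w : ℝ) :
    Int.fract (F w - F a) = F (a + Int.fract (w - a)) - F a := by
  have hw : w = (a + Int.fract (w - a)) + (⌊w - a⌋ : ℝ) := by
    rw [Int.fract]; ring
  have h1 : F w = F (a + Int.fract (w - a)) + (⌊w - a⌋ : ℝ) := by
    conv_lhs => rw [hw]
    exact hint _ _
  have hb0 : 0 ≤ F (a + Int.fract (w - a)) - F a := by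
    have := hmono.monotone (le_add_of_nonneg_right (Int.fract_nonneg (w - a)) : a ≤ a + Int.fract (w - a))
    linarith
  have hb1 : F (a + Int.fract (w - a)) - F a < 1 := by
    have h2 : F (a + Int.fract (w - a)) < F (a + 1) := hmono (by linarith [Int.fract_lt_one (w - a)])
    have h3 : F (a + 1) = F a + 1 := by
      exact_mod_cast hint a 1
    linarith
  rw [h1, show F (a + Int.fract (w - a)) + (⌊w - a⌋ : ℝ) - F a
      = (F (a + Int.fract (w - a)) - F a) + (⌊w - a⌋ : ℤ) by ring,
    Int.fract_add_intCast]
  exact Int.fract_eq_self.2 ⟨hb0, hb1⟩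

/-- An orientation preserving circle homeomorphism preserves arcs. -/
lemma inArc_map {F : ℝ → ℝ} (hmono : StrictMono F)
    (hint : ∀ (y : ℝ) (m : ℤ), F (y + m) = F y + m) (a w b : ℝ) :
    inArc a w b ↔ inArc (F a) (F w) (F b) := by
  unfold inArc
  rw [key_fract hmono hint a w, key_fract hmono hint a b]
  constructor
  · rintro ⟨hw1, hw2⟩
    refine ⟨?_, ?_⟩
    · have := hmono (show a < a + Int.fract (w - a) by linarith)
      linarith
    · have := hmono (show a + Int.fract (w - a) < a + Int.fract (b - a) by linarith)
      linarith
  · rintro ⟨hw1, hw2⟩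
    refine ⟨?_, ?_⟩
    · have := hmono.lt_iff_lt.1 (show F a < F (a + Int.fract (w - a)) by linarith)
      linarith
    · have := hmono.lt_iff_lt.1
        (show F (a + Int.fract (w - a)) < F (a + Int.fract (b - a)) by linarith)
      linarith


/-- **Lemma.** If `{x, …, fⁿ(x)}` is an adapted orbit segment of a `C¹`-diffeomorphism `f`
of `S¹` with irrational rotation number, with initial basic interval `[a,b]` and final
basic interval `[c,d]` (so `c = fⁱ(x)`, `d = fʲ(x)`, `a = f^{n-j}(x)`, `b = f^{n-i}(x)`),
then the open arcs `(f(c), f(d))` and `(f⁻¹(a), f⁻¹(b))` are disjoint from the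
orbit segment. -/
theorem adapted_images_disjoint (α : ℝ) (hα : Irrational α) (f : CircleDiffeo)
    (hf : hasRotationNumber f α) (x : ℝ) (n i j : ℕ)
    (hseg : IsAdaptedSeg f.toFun x n i j) :
    ∀ k ≤ n,
      ¬ inArc (f.toFun^[i + 1] x) (f.toFun^[k] x) (f.toFun^[j + 1] x) ∧
      ¬ inArc (f.toFun^[n - j - 1] x) (f.toFun^[k] x) (f.toFun^[n - i - 1] x) := by
  intro k hk
  set F := f.toFun with hF
  have hmono : StrictMono F := strictMono_of_deriv_pos f.deriv_pos
  have hint : ∀ (y : ℝ) (m : ℤ), F (y + m) = F y + m := f.map_add_int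
  have nper : ∀ p q : ℕ, Int.fract (F^[p] x - F^[q] x) = 0 → p = q :=
    no_periodic α hα f hf x
  have hmap : ∀ a w b, inArc a w b ↔ inArc (F a) (F w) (F b) := inArc_map hmono hint
  have hi1 := hseg.hi1
  have hi2 := hseg.hi2
  have hj1 := hseg.hj1
  have hj2 := hseg.hj2
  have hn : 2 ≤ n := by omega
  have e : ∀ p q : ℕ, p + 1 = q → F (F^[p] x) = F^[q] x := by
    intro p q h
    rw [← h]
    exact (Function.iterate_succ_apply' F p x).symm
  -- any point with index `1 ≤ m ≤ n` avoids the arc `(f(c), f(d))`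
  have fact1 : ∀ m : ℕ, 1 ≤ m → m ≤ n → ¬ inArc (F^[i + 1] x) (F^[m] x) (F^[j + 1] x) := by
    intro m hm1 hmn hIn
    have h' : inArc (F^[i] x) (F^[m - 1] x) (F^[j] x) := by
      rw [hmap, e i (i + 1) rfl, e j (j + 1) rfl, e (m - 1) m (by omega)]
      exact hIn
    have h0 := hseg.fn_only (m - 1) (by omega) h'
    have := nper (m - 1) n h0
    omega
  -- un-mapping for part 2 : `F^[m] x ∈ (F^[n-j-1]x, F^[n-i-1]x)` pushes forward by `F`
  have push : ∀ m : ℕ, inArc (F^[n - j - 1] x) (F^[m] x) (F^[n - i - 1] x) →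
      inArc (F^[n - j] x) (F^[m + 1] x) (F^[n - i] x) := by
    intro m hIn
    have := (hmap _ _ _).1 hIn
    rwa [e (n - j - 1) (n - j) (by omega), e (n - i - 1) (n - i) (by omega),
      e m (m + 1) rfl] at this
  constructor
  · -- part 1 : the arc `(f(c), f(d))`
    rcases Nat.eq_zero_or_pos k with hk0 | hk1
    · subst hk0
      intro hIn
      rw [Function.iterate_zero_apply] at hIn
      have h3 : ¬ inArc (F^[n - j] x) (F^[i + 1] x) (F^[n - i] x) := by
        intro hC
        have h0 := hseg.x_only (i + 1) (by omega) hC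
        have h0' : Int.fract (F^[i + 1] x - F^[0] x) = 0 := by
          rwa [Function.iterate_zero_apply]
        have := nper (i + 1) 0 h0'
        omega
      have h4 : ¬ inArc (F^[i + 1] x) (F^[n - j] x) (F^[j + 1] x) :=
        fact1 (n - j) (by omega) (by omega)
      have hg := geom hseg.x_mem hIn h3 h4
      have := nper (i + 1) (n - j) hg
      exact hseg.adapted (by omega)
    · exact fact1 k hk1 hk
  · -- part 2 : the arc `(f⁻¹(a), f⁻¹(b))`
    intro hIn
    have hIn' := push k hIn
    rcases Nat.lt_or_ge k n with hkn | hkn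
    · have h0 := hseg.x_only (k + 1) (by omega) hIn'
      have h0' : Int.fract (F^[k + 1] x - F^[0] x) = 0 := by
        rwa [Function.iterate_zero_apply]
      have := nper (k + 1) 0 h0'
      omega
    · obtain rfl : n = k := le_antisymm hkn hk
      -- the image of the final interval contains `F^[n+1] x`
      have hfn : inArc (F^[i + 1] x) (F^[n + 1] x) (F^[j + 1] x) := by
        have := (hmap _ _ _).1 hseg.fn_mem
        rwa [e i (i + 1) rfl, e j (j + 1) rfl, e n (n + 1) rfl] at this
      have h3 : ¬ inArc (F^[n - j] x) (F^[j + 1] x) (F^[n - i] x) := by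
        intro hC
        have h0 := hseg.x_only (j + 1) (by omega) hC
        have h0' : Int.fract (F^[j + 1] x - F^[0] x) = 0 := by
          rwa [Function.iterate_zero_apply]
        have := nper (j + 1) 0 h0'
        omega
      have h4 : ¬ inArc (F^[i + 1] x) (F^[n - i] x) (F^[j + 1] x) :=
        fact1 (n - i) (by omega) (by omega)
      -- reverse orientation and apply the geometric lemma
      have h3' : ¬ inArc (-(F^[n - i] x)) (-(F^[j + 1] x)) (-(F^[n - j] x)) := by
        intro hC
        have := inArc_neg_mp hC
        rw [neg_neg, neg_neg, neg_neg] at this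
        exact h3 this
      have h4' : ¬ inArc (-(F^[j + 1] x)) (-(F^[n - i] x)) (-(F^[i + 1] x)) := by
        intro hC
        have := inArc_neg_mp hC
        rw [neg_neg, neg_neg, neg_neg] at this
        exact h4 this
      have hg := geom (inArc_neg_mp hIn') (inArc_neg_mp hfn) h3' h4'
      have hg' : Int.fract (F^[n - i] x - F^[j + 1] x) = 0 := by
        rw [show F^[n - i] x - F^[j + 1] x = -(F^[j + 1] x) - -(F^[n - i] x) by ring]
        exact hg
      have := nper (n - i) (j + 1) hg'
      exact hseg.adapted (by omega)
end

section
/- For all positive reals α, β, γ, δ and every point x ∈ ℝ, one has min(α/γ, β/δ) ≤ h'_{α,β}(x)/h'_{γ,δ}(x) ≤ max(α/γ, β/δ), where h' denotes the derivative. -/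
open Set

/-- The map `h_{α,β} : ℝ → ℝ` : `x ↦ αx` for `x < -1`,
`x ↦ ((β-α)/4)x² + ((β+α)/2)x + (β-α)/4` for `x ∈ [-1,1]`, and `x ↦ βx` for `x > 1`. -/
noncomputable def hab (a b : ℝ) (x : ℝ) : ℝ :=
  if x < -1 then a * x
  else if x ≤ 1 then (b - a) / 4 * x ^ 2 + (b + a) / 2 * x + (b - a) / 4
  else b * x

/-! The derivative of `h_{α,β}` at `x` is the convex combination `(1 - t) α + t β` with weight
`t = clamp((x + 1) / 2) ∈ [0, 1]` depending only on `x`. Hence `h'_{α,β}(x) / h'_{γ,δ}(x)` is a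
weighted mediant of `α / γ` and `β / δ`, and so lies between them. -/
theorem min_le_weighted_mediant_le_max {a b c d u v : ℝ} (hc : 0 < c) (hd : 0 < d) (hu : 0 ≤ u)
    (hv : 0 ≤ v) (huv : 0 < u + v) :
    min (a / c) (b / d) ≤ (u * a + v * b) / (u * c + v * d) ∧
      (u * a + v * b) / (u * c + v * d) ≤ max (a / c) (b / d) := by
  have hden : 0 < u * c + v * d := by
    rcases hu.eq_or_lt with rfl | hu
    · simpa using mul_pos (by simpa using huv) hd
    · exact add_pos_of_pos_of_nonneg (mul_pos hu hc) (mul_nonneg hv hd.le)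
  set m := min (a / c) (b / d)
  set M := max (a / c) (b / d)
  have hma : m * c ≤ a := (le_div_iff₀ hc).mp (min_le_left _ _)
  have hmb : m * d ≤ b := (le_div_iff₀ hd).mp (min_le_right _ _)
  have hMa : a ≤ M * c := (div_le_iff₀ hc).mp (le_max_left _ _)
  have hMb : b ≤ M * d := (div_le_iff₀ hd).mp (le_max_right _ _)
  constructor
  · rw [le_div_iff₀ hden]
    nlinarith [mul_le_mul_of_nonneg_left hma hu, mul_le_mul_of_nonneg_left hmb hv]
  · rw [div_le_iff₀ hden]
    nlinarith [mul_le_mul_of_nonneg_left hMa hu, mul_le_mul_of_nonneg_left hMb hv]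

theorem HasDerivWithinAt.of_eqOn_of_isClosed {𝕜 F : Type*} [NontriviallyNormedField 𝕜]
    [NormedAddCommGroup F] [NormedSpace 𝕜 F] {f g : 𝕜 → F} {f' : F} {s : Set 𝕜} {x : 𝕜}
    (hs : IsClosed s) (hfg : EqOn f g s) (hg : x ∈ s → HasDerivAt g f' x) :
    HasDerivWithinAt f f' s x := by
  by_cases hx : x ∈ s
  · exact (hg hx).hasDerivWithinAt.congr hfg (hfg hx)
  · exact HasFDerivWithinAt.of_notMem_closure (by rwa [hs.closure_eq])

noncomputable def habWeight (x : ℝ) : ℝ := projIcc 0 1 zero_le_one ((x + 1) / 2)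

theorem habWeight_mem_Icc (x : ℝ) : habWeight x ∈ Icc 0 1 := Subtype.prop _

theorem habWeight_of_le_neg_one {x : ℝ} (hx : x ≤ -1) : habWeight x = 0 := by
  rw [habWeight, projIcc_of_le_left]; linarith

theorem habWeight_of_mem_Icc {x : ℝ} (hx : x ∈ Icc (-1) 1) : habWeight x = (x + 1) / 2 := by
  rw [habWeight, projIcc_of_mem]; constructor <;> linarith [hx.1, hx.2]

theorem habWeight_of_one_le {x : ℝ} (hx : 1 ≤ x) : habWeight x = 1 := by
  rw [habWeight, projIcc_of_right_le]; linarith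

section

variable (a b : ℝ)

theorem hab_eqOn_Iic : EqOn (hab a b) (fun y => a * y) (Iic (-1)) := by
  intro y (hy : y ≤ -1)
  rcases hy.lt_or_eq with hy | rfl
  · simp [hab, hy]
  · norm_num [hab]; ring

theorem hab_eqOn_Icc :
    EqOn (hab a b) (fun y => (b - a) / 4 * y ^ 2 + (b + a) / 2 * y + (b - a) / 4) (Icc (-1) 1) :=
  fun y hy => by simp [hab, not_lt.mpr hy.1, hy.2]

theorem hab_eqOn_Ici : EqOn (hab a b) (fun y => b * y) (Ici 1) := by
  intro y (hy : 1 ≤ y)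
  rcases hy.lt_or_eq with hy | rfl
  · simp [hab, hy.not_ge, (show ¬ y < -1 by linarith)]
  · norm_num [hab]; ring

theorem hab_hasDerivAt (x : ℝ) :
    HasDerivAt (hab a b) ((1 - habWeight x) * a + habWeight x * b) x := by
  set f' := (1 - habWeight x) * a + habWeight x * b with hf'
  have hleft : HasDerivWithinAt (hab a b) f' (Iic (-1)) x :=
    .of_eqOn_of_isClosed isClosed_Iic (hab_eqOn_Iic a b) fun hx => by
      simpa [hf', habWeight_of_le_neg_one hx] using (hasDerivAt_id x).const_mul a
  have hmid : HasDerivWithinAt (hab a b) f' (Icc (-1) 1) x :=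
    .of_eqOn_of_isClosed isClosed_Icc (hab_eqOn_Icc a b) fun hx => by
      rw [hf', habWeight_of_mem_Icc hx]
      convert ((((hasDerivAt_pow 2 x).const_mul ((b - a) / 4)).add
        ((hasDerivAt_id x).const_mul ((b + a) / 2))).add_const ((b - a) / 4)) using 1
      simp only [id_eq, Pi.add_apply]; ring
  have hright : HasDerivWithinAt (hab a b) f' (Ici 1) x :=
    .of_eqOn_of_isClosed isClosed_Ici (hab_eqOn_Ici a b) fun hx => by
      simpa [hf', habWeight_of_one_le hx] using (hasDerivAt_id x).const_mul b
  have := (hleft.union hmid).union hright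
  rwa [Iic_union_Icc_eq_Iic (by norm_num), Iic_union_Ici, hasDerivWithinAt_univ] at this

end

theorem hab_deriv_ratio_general (a b c d : ℝ) (hc : 0 < c) (hd : 0 < d)
    (x : ℝ) :
    min (a / c) (b / d) ≤ deriv (hab a b) x / deriv (hab c d) x ∧
      deriv (hab a b) x / deriv (hab c d) x ≤ max (a / c) (b / d) := by
  obtain ⟨ht₀, ht₁⟩ := habWeight_mem_Icc x
  rw [(hab_hasDerivAt a b x).deriv, (hab_hasDerivAt c d x).deriv]
  exact min_le_weighted_mediant_le_max hc hd (sub_nonneg.mpr ht₁) ht₀ (by simp)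

/-- **Lemma.** For all positive reals `α, β, γ, δ` and every `x ∈ ℝ`,
`min (α/γ) (β/δ) ≤ h'_{α,β}(x) / h'_{γ,δ}(x) ≤ max (α/γ) (β/δ)`. -/
theorem hab_deriv_ratio (a b c d : ℝ) (ha : 0 < a) (hb : 0 < b) (hc : 0 < c) (hd : 0 < d)
    (x : ℝ) :
    min (a / c) (b / d) ≤ deriv (hab a b) x / deriv (hab c d) x ∧
      deriv (hab a b) x / deriv (hab c d) x ≤ max (a / c) (b / d) :=
  hab_deriv_ratio_general a b c d hc hd x
end

section
/- Let (f_i)_{i∈ℤ} be a sequence of orientation-preserving C¹ diffeomorphisms of [0,1] such that f_n converges to the identity in the C¹ topology as n → ±∞. Then for every ε > 0 there exist an integer n₀ and a sequence (g_i)_{i∈ℤ} of C¹ diffeomorphisms of [0,1], each ε-C¹-close to the identity, such that g_i = f_i for all |i| ≥ n₀ and g_{n₀}∘g_{n₀−1}∘⋯∘g_{−n₀+1}∘g_{−n₀} = f_{n₀}∘f_{n₀−1}∘⋯∘f_{−n₀+1}∘f_{−n₀}. -/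
/-!
Choose `N` such that every `fᵢ` with `|i| ≥ N` is `δ`-close to the identity, and let
`G = f_N ∘ ⋯ ∘ f_{-N}`. Along the straight-line isotopy `P_t = id + t (G - id)` from the identity
to `G`, the maps `P_{(j+1)/k} ∘ P_{j/k}⁻¹`, `j < k`, compose to `G` and are `O(1/k)`-close to the
identity in `C¹`, because `P_t'` is bounded below uniformly in `t`. To make room for these `k`
factors without changing the number of factors, the maps `f_{N+1}, …, f_{N+2k}` are composed in
pairs (two `δ`-close maps compose to a `5δ`-close one) and the slots left over are filled with
identities; then `n₀ = N + 2k + 1`.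
-/

open Set Filter
structure IsIntervalDiffeo (h : ℝ → ℝ) (u v : ℝ) : Prop where
  contDiffOn : ContDiffOn ℝ 1 h (Set.Icc u v)
  fix_left : h u = u
  fix_right : h v = v
  mono : StrictMonoOn h (Set.Icc u v)
  deriv_pos : ∀ w ∈ Set.Icc u v, 0 < derivWithin h (Set.Icc u v) w

/-- The `C¹` distance from a diffeomorphism of `[0,1]` to the identity. -/
noncomputable def distId (g : ℝ → ℝ) : ℝ :=
  (⨆ x : Set.Icc (0:ℝ) 1, |g x.1 - x.1|) +
    (⨆ x : Set.Icc (0:ℝ) 1, |derivWithin g (Set.Icc (0:ℝ) 1) x.1 - 1|)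

/-- `compRange f lo k = f (lo+k) ∘ ⋯ ∘ f (lo+1) ∘ f lo`. -/
def compRange (f : ℤ → ℝ → ℝ) (lo : ℤ) : ℕ → ℝ → ℝ
  | 0 => f lo
  | (k + 1) => f (lo + (k : ℤ) + 1) ∘ compRange f lo k

open scoped Topology
open Function (invFunOn)

theorem HasDerivWithinAt.of_local_left_inverse {𝕜 : Type*} [NontriviallyNormedField 𝕜]
    {f g : 𝕜 → 𝕜} {f' a : 𝕜} {s t : Set 𝕜} (hg : Tendsto g (𝓝[s] a) (𝓝[t] (g a)))
    (hf : HasDerivWithinAt f f' t (g a)) (hf' : f' ≠ 0) (ha : a ∈ s)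
    (hfg : ∀ᶠ y in 𝓝[s] a, f (g y) = y) : HasDerivWithinAt g f'⁻¹ s a :=
  HasFDerivWithinAt.of_local_left_inverse
    (f' := ContinuousLinearEquiv.unitsEquivAut 𝕜 (Units.mk0 f' hf')) hg hf ha hfg

namespace IsIntervalDiffeo

variable {h k : ℝ → ℝ} {u v : ℝ}

theorem mapsTo (hh : IsIntervalDiffeo h u v) : MapsTo h (Icc u v) (Icc u v) := fun _ hx =>
  ⟨hh.fix_left ▸ hh.mono.monotoneOn (left_mem_Icc.2 (hx.1.trans hx.2)) hx hx.1,
    hh.fix_right ▸ hh.mono.monotoneOn hx (right_mem_Icc.2 (hx.1.trans hx.2)) hx.2⟩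

theorem continuousOn (hh : IsIntervalDiffeo h u v) : ContinuousOn h (Icc u v) :=
  hh.contDiffOn.continuousOn

theorem surjOn (hh : IsIntervalDiffeo h u v) : SurjOn h (Icc u v) (Icc u v) := by
  rcases le_or_gt u v with huv | huv
  · have := intermediate_value_Icc huv hh.continuousOn
    rwa [hh.fix_left, hh.fix_right] at this
  · simp [Icc_eq_empty_of_lt huv]

theorem hasDerivWithinAt (hh : IsIntervalDiffeo h u v) {x : ℝ} (hx : x ∈ Icc u v) :
    HasDerivWithinAt h (derivWithin h (Icc u v) x) (Icc u v) x :=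
  (hh.contDiffOn.differentiableOn one_ne_zero x hx).hasDerivWithinAt

theorem continuousOn_derivWithin (huv : u < v) (hh : IsIntervalDiffeo h u v) :
    ContinuousOn (derivWithin h (Icc u v)) (Icc u v) :=
  hh.contDiffOn.continuousOn_derivWithin (uniqueDiffOn_Icc huv) le_rfl

theorem of_hasDerivWithinAt (huv : u < v) {h' : ℝ → ℝ} (hu : h u = u) (hv : h v = v)
    (hd : ∀ x ∈ Icc u v, HasDerivWithinAt h (h' x) (Icc u v) x)
    (hc : ContinuousOn h' (Icc u v)) (hpos : ∀ x ∈ Icc u v, 0 < h' x) :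
    IsIntervalDiffeo h u v := by
  have hderiv : EqOn (derivWithin h (Icc u v)) h' (Icc u v) := fun x hx =>
    (hd x hx).derivWithin (uniqueDiffOn_Icc huv x hx)
  have hcont : ContinuousOn h (Icc u v) := fun x hx => (hd x hx).continuousWithinAt
  refine ⟨(contDiffOn_one_iff_derivWithin (uniqueDiffOn_Icc huv)).2
      ⟨fun x hx => (hd x hx).differentiableWithinAt, hc.congr hderiv⟩, hu, hv,
    strictMonoOn_of_hasDerivWithinAt_pos (convex_Icc u v) hcont
      (fun x hx => (hd x (interior_subset hx)).mono interior_subset)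
      (fun x hx => hpos x (interior_subset hx)),
    fun x hx => hderiv hx ▸ hpos x hx⟩

theorem comp (huv : u < v) (hh : IsIntervalDiffeo h u v) (hk : IsIntervalDiffeo k u v) :
    IsIntervalDiffeo (h ∘ k) u v :=
  of_hasDerivWithinAt huv (by simp [hk.fix_left, hh.fix_left])
    (by simp [hk.fix_right, hh.fix_right])
    (fun x hx => (hh.hasDerivWithinAt (hk.mapsTo hx)).comp x (hk.hasDerivWithinAt hx) hk.mapsTo)
    (((hh.continuousOn_derivWithin huv).comp hk.continuousOn hk.mapsTo).mul
      (hk.continuousOn_derivWithin huv))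
    fun x hx => mul_pos (hh.deriv_pos _ (hk.mapsTo hx)) (hk.deriv_pos x hx)

theorem continuousOn_invFunOn (hh : IsIntervalDiffeo h u v) :
    ContinuousOn (invFunOn h (Icc u v)) (Icc u v) := by
  have hmaps := hh.surjOn.mapsTo_invFunOn
  have hleft := hh.mono.injOn.leftInvOn_invFunOn
  have hright := hh.surjOn.rightInvOn_invFunOn
  have hmono : Monotone (hmaps.restrict _ _ _) := fun y z hyz => by
    by_contra hlt
    have := hh.mono (hmaps z.2) (hmaps y.2) (not_le.1 hlt)
    rw [hright y.2, hright z.2] at this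
    exact absurd hyz (not_le.2 this)
  have hsurj : Function.Surjective (hmaps.restrict _ _ _) := fun x =>
    ⟨⟨h x, hh.mapsTo x.2⟩, Subtype.ext (hleft x.2)⟩
  rw [continuousOn_iff_continuous_domRestrict]
  exact continuous_subtype_val.comp (hmono.continuous_of_surjective hsurj)

theorem hasDerivWithinAt_invFunOn (hh : IsIntervalDiffeo h u v) {y : ℝ}
    (hy : y ∈ Icc u v) :
    HasDerivWithinAt (invFunOn h (Icc u v))
      (derivWithin h (Icc u v) (invFunOn h (Icc u v) y))⁻¹ (Icc u v) y := by
  have hmaps := hh.surjOn.mapsTo_invFunOn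
  refine HasDerivWithinAt.of_local_left_inverse
    ((hh.continuousOn_invFunOn y hy).tendsto_nhdsWithin hmaps)
    (hh.hasDerivWithinAt (hmaps hy)) (hh.deriv_pos _ (hmaps hy)).ne' hy ?_
  filter_upwards [self_mem_nhdsWithin] with z hz using hh.surjOn.rightInvOn_invFunOn hz

end IsIntervalDiffeo

theorem isIntervalDiffeo_id {u v : ℝ} (huv : u < v) : IsIntervalDiffeo id u v :=
  .of_hasDerivWithinAt huv rfl rfl (fun x _ => hasDerivWithinAt_id x _) continuousOn_const
    fun _ _ => one_pos

theorem isIntervalDiffeo_invFunOn {h : ℝ → ℝ} {u v : ℝ} (huv : u < v)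
    (hh : IsIntervalDiffeo h u v) :
    IsIntervalDiffeo (invFunOn h (Icc u v)) u v := by
  have hmaps := hh.surjOn.mapsTo_invFunOn
  have hleft := hh.mono.injOn.leftInvOn_invFunOn
  refine .of_hasDerivWithinAt huv ?_ ?_ (fun y hy => hh.hasDerivWithinAt_invFunOn hy)
    (((hh.continuousOn_derivWithin huv).comp hh.continuousOn_invFunOn hmaps).inv₀
      fun y hy => (hh.deriv_pos _ (hmaps hy)).ne')
    fun y hy => inv_pos.2 (hh.deriv_pos _ (hmaps hy))
  · simpa [hh.fix_left] using hleft (left_mem_Icc.2 huv.le)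
  · simpa [hh.fix_right] using hleft (right_mem_Icc.2 huv.le)

local notation "𝕀" => Icc (0 : ℝ) 1

section distId

variable {g a b : ℝ → ℝ}

theorem distId_le {c d : ℝ} (hc : ∀ x ∈ 𝕀, |g x - x| ≤ c)
    (hd : ∀ x ∈ 𝕀, |derivWithin g 𝕀 x - 1| ≤ d) : distId g ≤ c + d :=
  have : Nonempty 𝕀 := ⟨⟨0, left_mem_Icc.2 zero_le_one⟩⟩
  add_le_add (ciSup_le fun x => hc x x.2) (ciSup_le fun x => hd x x.2)

theorem abs_sub_le_distId (hg : IsIntervalDiffeo g 0 1) {x : ℝ} (hx : x ∈ 𝕀) :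
    |g x - x| ≤ distId g :=
  le_add_of_le_of_nonneg
    (le_ciSup (f := fun x : 𝕀 => |g x - x|)
      (image_eq_range (fun x => |g x - x|) 𝕀 ▸ isCompact_Icc.bddAbove_image
        (hg.continuousOn.sub continuousOn_id).abs) ⟨x, hx⟩)
    (Real.iSup_nonneg fun _ => abs_nonneg _)

theorem abs_derivWithin_sub_one_le_distId (hg : IsIntervalDiffeo g 0 1) {x : ℝ} (hx : x ∈ 𝕀) :
    |derivWithin g 𝕀 x - 1| ≤ distId g :=
  le_add_of_nonneg_of_le (Real.iSup_nonneg fun _ => abs_nonneg _)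
    (le_ciSup (f := fun x : 𝕀 => |derivWithin g 𝕀 x - 1|)
      (image_eq_range (fun x => |derivWithin g 𝕀 x - 1|) 𝕀 ▸ isCompact_Icc.bddAbove_image
        ((hg.continuousOn_derivWithin zero_lt_one).sub continuousOn_const).abs) ⟨x, hx⟩)

theorem distId_nonneg : 0 ≤ distId g :=
  add_nonneg (Real.iSup_nonneg fun _ => abs_nonneg _) (Real.iSup_nonneg fun _ => abs_nonneg _)

theorem distId_id : distId id = 0 :=
  le_antisymm
    ((distId_le (c := 0) (d := 0) (fun x _ => by simp) fun x hx => by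
      simp [derivWithin_id x 𝕀 (uniqueDiffOn_Icc zero_lt_one x hx)]).trans_eq (add_zero 0))
    distId_nonneg

theorem distId_comp_le (ha : IsIntervalDiffeo a 0 1) (hb : IsIntervalDiffeo b 0 1) :
    distId (a ∘ b) ≤ (distId a + distId b) + (distId a * (1 + distId b) + distId b) := by
  refine distId_le (fun x hx => ?_) fun x hx => ?_
  · calc |a (b x) - x| ≤ |a (b x) - b x| + |b x - x| := abs_sub_le _ _ _
      _ ≤ distId a + distId b :=
        add_le_add (abs_sub_le_distId ha (hb.mapsTo hx)) (abs_sub_le_distId hb hx)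
  · set a' := derivWithin a 𝕀 (b x)
    set b' := derivWithin b 𝕀 x
    have hb' : |b'| ≤ 1 + distId b := by
      linarith [abs_sub_abs_le_abs_sub b' 1, abs_one (α := ℝ),
        abs_derivWithin_sub_one_le_distId hb hx]
    rw [derivWithin_comp x ((ha.hasDerivWithinAt (hb.mapsTo hx)).differentiableWithinAt)
      (hb.hasDerivWithinAt hx).differentiableWithinAt hb.mapsTo]
    calc |a' * b' - 1| = |(a' - 1) * b' + (b' - 1)| := by ring_nf
      _ ≤ |a' - 1| * |b'| + |b' - 1| := (abs_add_le _ _).trans_eq (by rw [abs_mul])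
      _ ≤ distId a * (1 + distId b) + distId b :=
        add_le_add (mul_le_mul (abs_derivWithin_sub_one_le_distId ha (hb.mapsTo hx)) hb'
          (abs_nonneg _) distId_nonneg) (abs_derivWithin_sub_one_le_distId hb hx)

theorem distId_comp_lt {δ : ℝ} (ha : IsIntervalDiffeo a 0 1) (hb : IsIntervalDiffeo b 0 1)
    (hδ : δ ≤ 1) (haδ : distId a < δ) (hbδ : distId b < δ) : distId (a ∘ b) < 5 * δ := by
  have := distId_comp_le ha hb
  nlinarith [distId_nonneg (g := a), distId_nonneg (g := b)]

end distId

section seqComp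

variable {α : Type*}

def seqComp (w : ℕ → α → α) : ℕ → α → α
  | 0 => id
  | n + 1 => w n ∘ seqComp w n

theorem seqComp_succ (w : ℕ → α → α) (n : ℕ) : seqComp w (n + 1) = w n ∘ seqComp w n := rfl

theorem seqComp_add (w : ℕ → α → α) (m n : ℕ) :
    seqComp w (m + n) = seqComp (fun j => w (m + j)) n ∘ seqComp w m := by
  induction n with
  | zero => rfl
  | succ n ih => rw [← add_assoc, seqComp_succ, ih, seqComp_succ]; rfl

theorem seqComp_congr {w w' : ℕ → α → α} {n : ℕ} (h : ∀ j < n, w j = w' j) :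
    seqComp w n = seqComp w' n := by
  induction n with
  | zero => rfl
  | succ n ih =>
    rw [seqComp_succ, seqComp_succ, ih fun j hj => h j (by omega), h n (by omega)]

@[simp] theorem seqComp_const_id (n : ℕ) : seqComp (fun _ => (id : α → α)) n = id := by
  induction n with
  | zero => rfl
  | succ n ih => rw [seqComp_succ, ih]; rfl

theorem seqComp_pairs (w : ℕ → α → α) (n : ℕ) :
    seqComp (fun j => w (2 * j + 1) ∘ w (2 * j)) n = seqComp w (2 * n) := by
  induction n with
  | zero => rfl
  | succ n ih => rw [seqComp_succ, ih, show 2 * (n + 1) = 2 * n + 1 + 1 by ring, seqComp_succ,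
      seqComp_succ]; rfl

theorem mapsTo_seqComp {w : ℕ → α → α} {s : Set α} {n : ℕ} (h : ∀ j < n, MapsTo (w j) s s) :
    MapsTo (seqComp w n) s s := by
  induction n with
  | zero => exact mapsTo_id s
  | succ n ih => exact (h n (by omega)).comp (ih fun j hj => h j (by omega))

theorem eqOn_seqComp_telescope [Nonempty α] {Q : ℕ → α → α} {s : Set α} {n : ℕ}
    (hQ : ∀ j < n, InjOn (Q j) s) :
    EqOn (seqComp (fun j => Q (j + 1) ∘ invFunOn (Q j) s) n ∘ Q 0) (Q n) s := by
  induction n with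
  | zero => exact fun _ _ => rfl
  | succ n ih =>
    intro x hx
    have hn : seqComp _ n (Q 0 x) = Q n x := ih (fun j hj => hQ j (by omega)) hx
    simp only [Function.comp_apply, seqComp_succ, hn, (hQ n (by omega)).leftInvOn_invFunOn hx]

end seqComp

theorem isIntervalDiffeo_seqComp {w : ℕ → ℝ → ℝ} {u v : ℝ} {n : ℕ} (huv : u < v)
    (h : ∀ j < n, IsIntervalDiffeo (w j) u v) : IsIntervalDiffeo (seqComp w n) u v := by
  induction n with
  | zero => exact isIntervalDiffeo_id huv
  | succ n ih => exact (h n (by omega)).comp huv (ih fun j hj => h j (by omega))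

theorem min_one_le_one_add_mul_sub_one {t : ℝ} (ht : t ∈ 𝕀) (y : ℝ) :
    min 1 y ≤ 1 + t * (y - 1) := by
  nlinarith [min_le_left 1 y, min_le_right 1 y, ht.1, ht.2]

section linearIsotopy

variable (G : ℝ → ℝ)

def linearIsotopy (t x : ℝ) : ℝ := x + t * (G x - x)

theorem linearIsotopy_zero : linearIsotopy G 0 = id :=
  funext fun x => by simp [linearIsotopy]

theorem linearIsotopy_one : linearIsotopy G 1 = G :=
  funext fun x => by simp [linearIsotopy]

variable {G}

theorem hasDerivWithinAt_linearIsotopy (hG : IsIntervalDiffeo G 0 1) (t : ℝ) {x : ℝ}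
    (hx : x ∈ 𝕀) :
    HasDerivWithinAt (linearIsotopy G t) (1 + t * (derivWithin G 𝕀 x - 1)) 𝕀 x :=
  (hasDerivWithinAt_id x 𝕀).add
    (((hG.hasDerivWithinAt hx).sub (hasDerivWithinAt_id x 𝕀)).const_mul t)

theorem isIntervalDiffeo_linearIsotopy (hG : IsIntervalDiffeo G 0 1) {t : ℝ} (ht : t ∈ 𝕀) :
    IsIntervalDiffeo (linearIsotopy G t) 0 1 :=
  .of_hasDerivWithinAt zero_lt_one (by simp [linearIsotopy, hG.fix_left])
    (by simp [linearIsotopy, hG.fix_right]) (fun _ hx => hasDerivWithinAt_linearIsotopy hG t hx)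
    (continuousOn_const.add (continuousOn_const.mul
      ((hG.continuousOn_derivWithin zero_lt_one).sub continuousOn_const)))
    fun x hx =>
      (lt_min one_pos (hG.deriv_pos x hx)).trans_le (min_one_le_one_add_mul_sub_one ht _)

theorem distId_linearIsotopy_comp_invFunOn_le (hG : IsIntervalDiffeo G 0 1) {m s t : ℝ}
    (hm : 0 < m) (hmG : ∀ x ∈ 𝕀, m ≤ derivWithin G 𝕀 x) (hs : s ∈ 𝕀) (hst : s ≤ t) :
    distId (linearIsotopy G t ∘ invFunOn (linearIsotopy G s) 𝕀) ≤
      (t - s) * (distId G + distId G / min 1 m) := by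
  have hP := isIntervalDiffeo_linearIsotopy hG hs
  have hmaps := hP.surjOn.mapsTo_invFunOn
  have hts : 0 ≤ t - s := sub_nonneg.2 hst
  rw [mul_add]
  refine distId_le (fun y hy => ?_) fun y hy => ?_
  · have hy' := hP.surjOn.rightInvOn_invFunOn hy
    set x := invFunOn (linearIsotopy G s) 𝕀 y
    have : linearIsotopy G t x - y = (t - s) * (G x - x) := by
      rw [← hy']; simp only [linearIsotopy]; ring
    rw [Function.comp_apply, this, abs_mul, abs_of_nonneg hts]
    exact mul_le_mul_of_nonneg_left (abs_sub_le_distId hG (hmaps hy)) hts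
  · have hx := hmaps hy
    rw [((hasDerivWithinAt_linearIsotopy hG t hx).comp y (hP.hasDerivWithinAt_invFunOn hy)
        hmaps).derivWithin (uniqueDiffOn_Icc zero_lt_one y hy),
      (hasDerivWithinAt_linearIsotopy hG s hx).derivWithin (uniqueDiffOn_Icc zero_lt_one _ hx)]
    set x := invFunOn (linearIsotopy G s) 𝕀 y
    set G' := derivWithin G 𝕀 x
    have hc : 0 < min 1 m := lt_min one_pos hm
    have hden : min 1 m ≤ 1 + s * (G' - 1) :=
      (min_le_min_left _ (hmG x hx)).trans (min_one_le_one_add_mul_sub_one hs _)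
    have : (1 + t * (G' - 1)) * (1 + s * (G' - 1))⁻¹ - 1 =
        (t - s) * (G' - 1) / (1 + s * (G' - 1)) := by
      have hne := (hc.trans_le hden).ne'
      rw [eq_div_iff hne, sub_mul, mul_assoc, inv_mul_cancel₀ hne]
      ring
    rw [this, abs_div, abs_mul, abs_of_nonneg hts, abs_of_pos (hc.trans_le hden), mul_div_assoc]
    exact mul_le_mul_of_nonneg_left (div_le_div₀ distId_nonneg
      (abs_derivWithin_sub_one_le_distId hG hx) hc hden) hts

end linearIsotopy

theorem IsIntervalDiffeo.exists_fragmentation {G : ℝ → ℝ} (hG : IsIntervalDiffeo G 0 1) {ε : ℝ}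
    (hε : 0 < ε) :
    ∃ (k : ℕ) (p : ℕ → ℝ → ℝ), (∀ j < k, IsIntervalDiffeo (p j) 0 1 ∧ distId (p j) < ε) ∧
      EqOn (seqComp p k) G 𝕀 := by
  obtain ⟨x₀, hx₀, hmin⟩ := isCompact_Icc.exists_isMinOn (nonempty_Icc.2 zero_le_one)
    (hG.continuousOn_derivWithin zero_lt_one)
  have hm := hG.deriv_pos x₀ hx₀
  set D := distId G + distId G / min 1 (derivWithin G 𝕀 x₀)
  have hD : 0 ≤ D := add_nonneg distId_nonneg (div_nonneg distId_nonneg (by positivity))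
  obtain ⟨k, hk⟩ := exists_nat_gt (D / ε)
  have hk0 : (0 : ℝ) < k := (div_nonneg hD hε.le).trans_lt hk
  set Q : ℕ → ℝ → ℝ := fun j => linearIsotopy G (j / k)
  have hmem : ∀ j ≤ k, (j / k : ℝ) ∈ 𝕀 := fun j hj =>
    ⟨by positivity, div_le_one_of_le₀ (by exact_mod_cast hj) hk0.le⟩
  have hQ : ∀ j ≤ k, IsIntervalDiffeo (Q j) 0 1 := fun j hj =>
    isIntervalDiffeo_linearIsotopy hG (hmem j hj)
  refine ⟨k, fun j => Q (j + 1) ∘ invFunOn (Q j) 𝕀, fun j hj => ⟨(hQ (j + 1) hj).comp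
    zero_lt_one (isIntervalDiffeo_invFunOn zero_lt_one (hQ j hj.le)), ?_⟩, ?_⟩
  · calc distId (Q (j + 1) ∘ invFunOn (Q j) 𝕀)
        ≤ ((j + 1 : ℕ) / k - j / k) * D :=
          distId_linearIsotopy_comp_invFunOn_le hG hm (fun x hx => hmin hx) (hmem j hj.le)
            (by gcongr; omega)
      _ = D / k := by push_cast; ring
      _ < ε := by rwa [div_lt_iff₀ hk0, mul_comm, ← div_lt_iff₀ hε]
  · simpa [Q, linearIsotopy_zero, linearIsotopy_one, hk0.ne'] using
      eqOn_seqComp_telescope (Q := Q) (s := 𝕀) fun j hj => (hQ j hj.le).mono.injOn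

section splice

variable {α β : Type*}

def seqAppend (w : ℕ → β) (n : ℕ) (w' : ℕ → β) (j : ℕ) : β :=
  if j < n then w j else w' (j - n)

theorem seqAppend_forall (p : β → Prop) {w w' : ℕ → β} {n m : ℕ} (hw : ∀ j < n, p (w j))
    (hw' : ∀ j < m, p (w' j)) : ∀ j < n + m, p (seqAppend w n w' j) := fun j hj => by
  unfold seqAppend
  split_ifs with h
  · exact hw j h
  · exact hw' _ (by omega)

theorem seqComp_seqAppend (w : ℕ → α → α) (n : ℕ) (w' : ℕ → α → α) (m : ℕ) :
    seqComp (seqAppend w n w') (n + m) = seqComp w' m ∘ seqComp w n := by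
  rw [seqComp_add, seqComp_congr (w := seqAppend w n w') (w' := w) fun j hj => if_pos hj]
  exact congrArg (· ∘ _) (seqComp_congr fun j _ => by simp [seqAppend])

theorem eqOn_seqComp_seqAppend_pairs {s : Set α} {p u : ℕ → α → α} {k L : ℕ}
    (h : EqOn (seqComp p k) (seqComp u L) s) :
    EqOn (seqComp (seqAppend p k (seqAppend (fun j => u (L + (2 * j + 1)) ∘ u (L + 2 * j)) k
      fun _ => id)) (L + 2 * k)) (seqComp u (L + 2 * k)) s := by
  have hL : seqComp (seqAppend p k (seqAppend (fun j => u (L + (2 * j + 1)) ∘ u (L + 2 * j)) k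
      fun _ => id)) (L + 2 * k) = seqComp (fun j => u (L + j)) (2 * k) ∘ seqComp p k := by
    rw [show L + 2 * k = k + (k + L) by ring, seqComp_seqAppend, seqComp_seqAppend,
      seqComp_const_id, ← seqComp_pairs]
    rfl
  rw [hL, seqComp_add]
  exact fun x hx => congrArg _ (h hx)

def splice (f : ℤ → β) (a : ℤ) (L : ℕ) (w : ℕ → β) (i : ℤ) : β :=
  if a ≤ i ∧ i < a + L then w (i - a).toNat else f i

theorem splice_of_lt_or_le {f : ℤ → β} {a i : ℤ} {L : ℕ} {w : ℕ → β}
    (h : i < a ∨ a + L ≤ i) : splice f a L w i = f i :=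
  if_neg (by omega)

theorem splice_forall (p : β → Prop) {f : ℤ → β} {a : ℤ} {L : ℕ} {w : ℕ → β}
    (hf : ∀ i, i < a ∨ a + L ≤ i → p (f i)) (hw : ∀ j < L, p (w j)) (i : ℤ) :
    p (splice f a L w i) := by
  unfold splice
  split_ifs with h
  · exact hw _ (by omega)
  · exact hf i (by omega)

theorem compRange_eq_seqComp (f : ℤ → ℝ → ℝ) (lo : ℤ) (n : ℕ) :
    compRange f lo n = seqComp (fun j => f (lo + j)) (n + 1) := by
  induction n with
  | zero => simp [compRange, seqComp]
  | succ n ih => rw [compRange, ih, seqComp_succ _ (n + 1), add_assoc]; rfl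

theorem eqOn_compRange_splice {f : ℤ → ℝ → ℝ} {s : Set ℝ} (hf : ∀ i, MapsTo (f i) s s)
    {lo a : ℤ} {L n : ℕ} (hlo : lo ≤ a) (hhi : a + L ≤ lo + n + 1) {w : ℕ → ℝ → ℝ}
    (hw : EqOn (seqComp w L) (seqComp (fun j => f (a + j)) L) s) :
    EqOn (compRange (splice f a L w) lo n) (compRange f lo n) s := by
  obtain ⟨d, rfl⟩ : ∃ d : ℕ, a = lo + d := ⟨(a - lo).toNat, by omega⟩
  obtain ⟨r, hr⟩ : ∃ r : ℕ, n + 1 = d + (L + r) := ⟨n + 1 - d - L, by omega⟩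
  simp only [compRange_eq_seqComp, hr, seqComp_add]
  have hpre : seqComp (fun j => splice f (lo + d) L w (lo + j)) d =
      seqComp (fun j => f (lo + j)) d :=
    seqComp_congr fun j hj => splice_of_lt_or_le (Or.inl (by omega))
  have hpost : seqComp (fun j => splice f (lo + d) L w (lo + ↑(d + (L + j)))) r =
      seqComp (fun j => f (lo + ↑(d + (L + j)))) r :=
    seqComp_congr fun j hj => splice_of_lt_or_le (Or.inr (by omega))
  have hwin : seqComp (fun j => splice f (lo + d) L w (lo + ↑(d + j))) L = seqComp w L :=
    seqComp_congr fun j hj => by rw [splice, if_pos (by omega)]; congr; omega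
  have hfwin : seqComp (fun j => f (lo + ↑(d + j))) L = seqComp (fun j => f (lo + d + j)) L :=
    seqComp_congr fun j hj => by push_cast; rw [add_assoc]
  rw [hpre, hpost, hwin, hfwin]
  exact fun x hx => congrArg _ (hw (mapsTo_seqComp (fun j _ => hf _) hx))

end splice

theorem exists_nat_forall_le_abs_of_eventually_cofinite {p : ℤ → Prop}
    (h : ∀ᶠ i in cofinite, p i) : ∃ N : ℕ, ∀ i : ℤ, (N : ℤ) ≤ |i| → p i := by
  obtain ⟨N, hN⟩ := ((eventually_cofinite.1 h).image Int.natAbs).bddAbove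
  refine ⟨N + 1, fun i hi => by_contra fun hpi => ?_⟩
  have := hN ⟨i, hpi, rfl⟩
  rw [Int.abs_eq_natAbs] at hi
  omega

/-- **Lemma (fragmentation).** Let `(fᵢ)_{i∈ℤ}` be orientation-preserving `C¹`
diffeomorphisms of `[0,1]` with `fₙ → id` in the `C¹` topology as `n → ±∞`. For every
`ε > 0` there are `n₀` and a sequence `(gᵢ)` of `C¹` diffeomorphisms of `[0,1]`, each
`ε`-`C¹`-close to the identity, with `gᵢ = fᵢ` for `|i| ≥ n₀` and
`g_{n₀}∘⋯∘g_{-n₀} = f_{n₀}∘⋯∘f_{-n₀}` on `[0,1]`. -/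
theorem fragmentation (f : ℤ → ℝ → ℝ) (hf : ∀ i : ℤ, IsIntervalDiffeo (f i) 0 1)
    (hconv : Tendsto (fun i : ℤ => distId (f i)) cofinite (nhds 0))
    (ε : ℝ) (hε : 0 < ε) :
    ∃ (n₀ : ℕ) (g : ℤ → ℝ → ℝ),
      (∀ i : ℤ, IsIntervalDiffeo (g i) 0 1) ∧
      (∀ i : ℤ, distId (g i) < ε) ∧
      (∀ i : ℤ, (n₀ : ℤ) ≤ |i| → g i = f i) ∧
      (∀ z ∈ Set.Icc (0:ℝ) 1,
        compRange g (-(n₀ : ℤ)) (2 * n₀) z = compRange f (-(n₀ : ℤ)) (2 * n₀) z) := by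
  set δ := min (ε / 5) 1
  obtain ⟨N, hN⟩ := exists_nat_forall_le_abs_of_eventually_cofinite
    (hconv.eventually_lt_const (show 0 < δ by positivity))
  set u : ℕ → ℝ → ℝ := fun j => f (-N + j)
  obtain ⟨k, p, hp, hpG⟩ := (isIntervalDiffeo_seqComp zero_lt_one (w := u) (n := 2 * N + 1)
    fun j _ => hf _).exists_fragmentation hε
  let P : (ℝ → ℝ) → Prop := fun h => IsIntervalDiffeo h 0 1 ∧ distId h < ε
  have hfar : ∀ i, (N : ℤ) ≤ |i| → P (f i) := fun i hi =>
    ⟨hf i, (hN i hi).trans_le (by linarith [min_le_left (ε / 5) 1])⟩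
  have hpair : ∀ i i', (N : ℤ) ≤ |i| → (N : ℤ) ≤ |i'| → P (f i ∘ f i') := fun i i' hi hi' =>
    ⟨(hf i).comp zero_lt_one (hf i'), (distId_comp_lt (hf i) (hf i') (min_le_right _ _)
      (hN i hi) (hN i' hi')).trans_le (by linarith [min_le_left (ε / 5) 1])⟩
  -- On the window `[-N, N + 2k + 1)`: the `k` fragments of `u (2N) ∘ ⋯ ∘ u 0`, then
  -- `u (2N + 1), …, u (2N + 2k)` composed in pairs, then `2N + 1` identities.
  set w := seqAppend p k (seqAppend (fun j => u (2 * N + 1 + (2 * j + 1)) ∘ u (2 * N + 1 + 2 * j))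
    k fun _ => id)
  have hw : ∀ j < 2 * N + 1 + 2 * k, P (w j) := fun j hj =>
    seqAppend_forall P hp (seqAppend_forall P (m := 2 * N + 1)
      (fun j _ => hpair _ _ (le_abs.2 (.inl (by omega))) (le_abs.2 (.inl (by omega))))
      fun _ _ => ⟨isIntervalDiffeo_id zero_lt_one, distId_id ▸ hε⟩) j (by omega)
  have hg := splice_forall P (a := -N) (fun i hi => hfar i (le_abs'.2 (by omega))) hw
  refine ⟨N + 2 * k + 1, splice f (-N) (2 * N + 1 + 2 * k) w, fun i => (hg i).1,
    fun i => (hg i).2, fun i hi => splice_of_lt_or_le (by rw [le_abs'] at hi; omega),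
    fun z hz => eqOn_compRange_splice (fun i => (hf i).mapsTo) (by omega) (by omega)
      (eqOn_seqComp_seqAppend_pairs hpG) hz⟩
end

section
/- Let α be irrational and consider the orbit segment {0, α, 2α, …, nα} of the rotation R_α on S¹ = ℝ/ℤ, with the associated quantities a_n, b_n, r_n, s_n. Then: (1) the length of each connected component of the complement of the orbit segment belongs to {a_n, b_n, a_n + b_n}; (2) r_n + s_n ≠ n + 1 if and only if (n+1)α ∉ [−a_n, b_n] (mod 1), and in that case a_{n+1} = a_n, b_{n+1} = b_n, r_{n+1} = r_n and s_{n+1} = s_n. -/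
open Set Filter

/-- `bseq α n = b_n` : the distance from `0` to the nearest point of the orbit segment
`{α, 2α, …, nα}` on its right, i.e. the least fractional part `{kα}`, `1 ≤ k ≤ n`. -/
noncomputable def bseq (α : ℝ) (n : ℕ) : ℝ :=
  sInf {t : ℝ | ∃ k : ℕ, 1 ≤ k ∧ k ≤ n ∧ t = Int.fract ((k : ℝ) * α)}

/-- `aseq α n = a_n` : the distance from `0` to the nearest point of the orbit segment
`{α, 2α, …, nα}` on its left, i.e. `1` minus the largest fractional part `{kα}`, `1 ≤ k ≤ n`. -/
noncomputable def aseq (α : ℝ) (n : ℕ) : ℝ :=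
  1 - sSup {t : ℝ | ∃ k : ℕ, 1 ≤ k ∧ k ≤ n ∧ t = Int.fract ((k : ℝ) * α)}

/-- `r` is the index `r_n ∈ {1,…,n}` with `r_n α = -a_n` (mod 1). -/
def IsRIndex (α : ℝ) (n r : ℕ) : Prop :=
  1 ≤ r ∧ r ≤ n ∧ Int.fract ((r : ℝ) * α) = 1 - aseq α n

/-- `s` is the index `s_n ∈ {1,…,n}` with `s_n α = b_n` (mod 1). -/
def IsSIndex (α : ℝ) (n s : ℕ) : Prop :=
  1 ≤ s ∧ s ≤ n ∧ Int.fract ((s : ℝ) * α) = bseq α n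

/-- `n + 1` is a closest return time: `(n+1)α ∈ [-a_n, b_n]` (mod 1). -/
def IsClosestReturn (α : ℝ) (n : ℕ) : Prop :=
  Int.fract (((n : ℝ) + 1) * α) ≤ bseq α n ∨ 1 - aseq α n ≤ Int.fract (((n : ℝ) + 1) * α)

/-- The set of reals lying (mod 1) in the positively oriented open arc from `u` to `v`. -/
def arcSet (u v : ℝ) : Set ℝ := {z : ℝ | inArc u z v}

/-- The intervals `I_n, R_α(I_n), …, R_α^w(I_n), R_α^{-w}(J_n), …, J_n` are pairwise
disjoint, where `I_n = (r α, s α)` and `J_n = ((n-s)α, (n-r)α)` (mod 1). -/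
def WanderDisjoint (α : ℝ) (n r s : ℕ) (w : ℤ) : Prop :=
  ∀ k l : ℤ, 0 ≤ k → k ≤ w → 0 ≤ l → l ≤ w →
    (k ≠ l → Disjoint (arcSet (((r : ℝ) + k) * α) (((s : ℝ) + k) * α))
      (arcSet (((r : ℝ) + l) * α) (((s : ℝ) + l) * α))) ∧
    (k ≠ l → Disjoint (arcSet (((n : ℝ) - s - k) * α) (((n : ℝ) - r - k) * α))
      (arcSet (((n : ℝ) - s - l) * α) (((n : ℝ) - r - l) * α))) ∧
    Disjoint (arcSet (((r : ℝ) + k) * α) (((s : ℝ) + k) * α))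
      (arcSet (((n : ℝ) - s - l) * α) (((n : ℝ) - r - l) * α))

/-- `w` is the *wandering time* `w(n)` : the largest integer `w` such that the intervals
`I_n, R_α(I_n), …, R_α^w(I_n), R_α^{-w}(J_n), …, J_n` are pairwise disjoint. -/
def IsWanderingTime (α : ℝ) (n r s : ℕ) (w : ℤ) : Prop :=
  WanderDisjoint α n r s w ∧ ∀ w' : ℤ, WanderDisjoint α n r s w' → w' ≤ w


/-!
Write `f j = {j α}` for `j : ℤ`. Irrationality makes `f` injective and positive away from `0`,
and `f (j - i)` is `f j - f i` or `f j - f i + 1`. Let `f s = b_n` and `f r = 1 - a_n` be the least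
and greatest of `f 1, …, f n`. The gap of the orbit segment starting at `k₁ α` has length
`min {f j | j ≠ 0, -k₁ ≤ j ≤ n - k₁}`. A value `f j` below the expected minimum would produce,
through `f (s - j)` or `f (r + j)`, a point of `{α, …, nα}` closer to `0` than `sα` or `rα`;
this shows that the minimum is `b_n` if `k₁ + s ≤ n`, `a_n` if `r ≤ k₁`, and `a_n + b_n`
otherwise. The same comparison places `f (n + 1)` strictly between `b_n` and `1 - a_n` unless
`r + s = n + 1`, so that the extremal indices persist. Replacing `α` by `-α` exchanges `r` and `s`
and halves every case analysis.
-/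

namespace Int

variable {R : Type*} [CommRing R] [LinearOrder R] [IsStrictOrderedRing R] [FloorRing R]

theorem fract_sub_of_le {a b : R} (h : fract b ≤ fract a) :
    fract (a - b) = fract a - fract b :=
  fract_eq_iff.2 ⟨sub_nonneg.2 h, by linarith [fract_lt_one a, fract_nonneg b],
    ⌊a⌋ - ⌊b⌋, by push_cast; rw [fract, fract]; abel⟩

theorem fract_sub_of_lt {a b : R} (h : fract a < fract b) :
    fract (a - b) = fract a - fract b + 1 :=
  fract_eq_iff.2 ⟨by linarith [fract_lt_one b, fract_nonneg a], by linarith,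
    ⌊a⌋ - ⌊b⌋ - 1, by push_cast; rw [fract, fract]; abel⟩

theorem fract_add_le_or_le (a b : R) : fract (a + b) ≤ fract b ∨ fract a ≤ fract (a + b) := by
  refine (le_or_gt (fract b) (fract (a + b))).symm.imp le_of_lt fun h => ?_
  have := fract_sub_of_le h
  rw [add_sub_cancel_right] at this
  linarith [fract_nonneg b]

end Int

open Int

namespace Irrational

variable {α : ℝ}

theorem fract_intCast_mul_pos (hα : Irrational α) {j : ℤ} (hj : j ≠ 0) :
    0 < fract (j * α) :=
  (fract_nonneg _).lt_of_ne' fun h => (hα.intCast_mul hj).ne_int ⌊(j : ℝ) * α⌋ <| by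
    rw [fract, sub_eq_zero] at h; exact h

theorem fract_intCast_mul_injective (hα : Irrational α) :
    Function.Injective fun j : ℤ => fract (j * α) := by
  intro i j hij
  by_contra hne
  refine (hα.intCast_mul (sub_ne_zero.2 hne)).ne_int (⌊(i : ℝ) * α⌋ - ⌊(j : ℝ) * α⌋) ?_
  simp only [fract] at hij
  push_cast
  linear_combination hij

theorem fract_intCast_mul_neg (hα : Irrational α) {j : ℤ} (hj : j ≠ 0) :
    fract (j * -α) = 1 - fract (j * α) := by
  rw [mul_neg, fract_neg (hα.fract_intCast_mul_pos hj).ne']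

end Irrational

theorem fract_neg_intCast_mul_neg (α : ℝ) (j : ℤ) :
    fract (((-j : ℤ) : ℝ) * -α) = fract (j * α) := by
  rw [Int.cast_neg, neg_mul_neg]

structure NearestReturns (α : ℝ) (n r s : ℤ) : Prop where
  one_le_r : 1 ≤ r
  r_le : r ≤ n
  one_le_s : 1 ≤ s
  s_le : s ≤ n
  min_le : ∀ k : ℤ, 1 ≤ k → k ≤ n → fract ((s : ℝ) * α) ≤ fract ((k : ℝ) * α)
  le_max : ∀ k : ℤ, 1 ≤ k → k ≤ n → fract ((k : ℝ) * α) ≤ fract ((r : ℝ) * α)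

namespace NearestReturns

variable {α : ℝ} {n r s : ℤ}

theorem neg (hα : Irrational α) (h : NearestReturns α n r s) : NearestReturns (-α) n s r := by
  have reflect : ∀ k : ℤ, 1 ≤ k → fract ((k : ℝ) * -α) = 1 - fract ((k : ℝ) * α) :=
    fun k hk => hα.fract_intCast_mul_neg (by omega)
  refine ⟨h.one_le_s, h.s_le, h.one_le_r, h.r_le, fun k hk hkn => ?_, fun k hk hkn => ?_⟩
  · rw [reflect k hk, reflect r h.one_le_r]
    linarith [h.le_max k hk hkn]
  · rw [reflect k hk, reflect s h.one_le_s]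
    linarith [h.min_le k hk hkn]

theorem min_lt_max (hα : Irrational α) (h : NearestReturns α n r s) (hrs : r ≠ s) :
    fract ((s : ℝ) * α) < fract ((r : ℝ) * α) :=
  (h.le_max s h.one_le_s h.s_le).lt_of_ne fun e => hrs (hα.fract_intCast_mul_injective e).symm

theorem ne_of_one_lt (hα : Irrational α) (h : NearestReturns α n r s) (hn : 1 < n) : r ≠ s := by
  rintro rfl
  have squeeze : ∀ k : ℤ, 1 ≤ k → k ≤ n → k = r := fun k hk hkn =>
    hα.fract_intCast_mul_injective ((h.le_max k hk hkn).antisymm (h.min_le k hk hkn))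
  have := squeeze 1 le_rfl (by omega)
  have := squeeze n (by omega) le_rfl
  omega

theorem min_le_fract (hα : Irrational α) (h : NearestReturns α n r s) {j : ℤ} (hj : j ≠ 0)
    (hsj : s - n ≤ j) (hjn : j ≤ n) : fract ((s : ℝ) * α) ≤ fract ((j : ℝ) * α) := by
  rcases hj.lt_or_gt with hneg | hpos
  · by_contra! hlt
    have := h.min_le (s - j) (by linarith [h.one_le_s]) (by omega)
    rw [Int.cast_sub, sub_mul, fract_sub_of_le hlt.le] at this
    linarith [hα.fract_intCast_mul_pos hj]
  · exact h.min_le j hpos hjn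

theorem one_sub_max_le_fract (hα : Irrational α) (h : NearestReturns α n r s) {j : ℤ}
    (hj : j ≠ 0) (hnj : -n ≤ j) (hjr : j + r ≤ n) :
    1 - fract ((r : ℝ) * α) ≤ fract ((j : ℝ) * α) := by
  have := (h.neg hα).min_le_fract hα.neg (j := -j) (by omega) (by omega) (by omega)
  rwa [hα.fract_intCast_mul_neg (by linarith [h.one_le_r]), fract_neg_intCast_mul_neg] at this

theorem min_add_one_sub_max_le_fract_of_pos (hα : Irrational α) (h : NearestReturns α n r s)
    {j : ℤ} (hj : 0 < j) (hjs : j < s) :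
    fract ((s : ℝ) * α) + 1 - fract ((r : ℝ) * α) ≤ fract ((j : ℝ) * α) := by
  have hsj : fract ((s : ℝ) * α) < fract ((j : ℝ) * α) :=
    (h.min_le j hj (by linarith [h.s_le])).lt_of_ne fun e => by
      have := hα.fract_intCast_mul_injective e; omega
  by_contra! hlt
  have := h.le_max (s - j) (by omega) (by linarith [h.s_le])
  rw [Int.cast_sub, sub_mul, fract_sub_of_lt hsj] at this
  linarith

theorem min_add_one_sub_max_le_fract (hα : Irrational α) (h : NearestReturns α n r s)
    {j : ℤ} (hj : j ≠ 0) (hrj : -r < j) (hjs : j < s) :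
    fract ((s : ℝ) * α) + 1 - fract ((r : ℝ) * α) ≤ fract ((j : ℝ) * α) := by
  rcases hj.lt_or_gt with hneg | hpos
  · have := (h.neg hα).min_add_one_sub_max_le_fract_of_pos hα.neg (j := -j) (by omega) (by omega)
    rw [hα.fract_intCast_mul_neg (by linarith [h.one_le_r]),
      hα.fract_intCast_mul_neg (by linarith [h.one_le_s]), fract_neg_intCast_mul_neg] at this
    linarith
  · exact h.min_add_one_sub_max_le_fract_of_pos hα hpos hjs

theorem gap_length_eq (hα : Irrational α) (h : NearestReturns α n r s) {p j₀ : ℤ} (hp : 0 ≤ p)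
    (hpn : p ≤ n) (hj₀ : j₀ ≠ 0) (hpj₀ : -p ≤ j₀) (hj₀n : j₀ ≤ n - p)
    (hgap : ∀ j, j ≠ 0 → -p ≤ j → j ≤ n - p → fract ((j₀ : ℝ) * α) ≤ fract ((j : ℝ) * α)) :
    fract ((j₀ : ℝ) * α) = 1 - fract ((r : ℝ) * α) ∨ fract ((j₀ : ℝ) * α) = fract ((s : ℝ) * α) ∨
      fract ((j₀ : ℝ) * α) = 1 - fract ((r : ℝ) * α) + fract ((s : ℝ) * α) := by
  have := h.one_le_r; have := h.one_le_s; have := h.r_le; have := h.s_le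
  by_cases hps : p + s ≤ n
  · exact Or.inr <| Or.inl <| (hgap s (by omega) (by omega) (by omega)).antisymm
      (h.min_le_fract hα hj₀ (by omega) (by omega))
  by_cases hrp : r ≤ p
  · have hfr : fract (((-r : ℤ) : ℝ) * α) = 1 - fract ((r : ℝ) * α) := by
      rw [Int.cast_neg, neg_mul, ← mul_neg, hα.fract_intCast_mul_neg (by omega)]
    have hle := hgap (-r) (by omega) (by omega) (by omega)
    rw [hfr] at hle
    exact Or.inl <| hle.antisymm (h.one_sub_max_le_fract hα hj₀ (by omega) (by omega))
  have hrs := h.ne_of_one_lt hα (by omega)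
  have hfsr : fract (((s - r : ℤ) : ℝ) * α) = 1 - fract ((r : ℝ) * α) + fract ((s : ℝ) * α) := by
    rw [Int.cast_sub, sub_mul, fract_sub_of_lt (h.min_lt_max hα hrs)]
    ring
  have hle := hgap (s - r) (by omega) (by omega) (by omega)
  have hge := h.min_add_one_sub_max_le_fract hα hj₀ (by omega) (by omega)
  rw [hfsr] at hle
  exact Or.inr <| Or.inr <| by linarith

theorem min_lt_fract_succ (hα : Irrational α) (h : NearestReturns α n r s) (hrs : r + s ≠ n + 1) :
    fract ((s : ℝ) * α) < fract (((n + 1 : ℤ) : ℝ) * α) := by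
  have := h.one_le_r; have := h.one_le_s; have := h.r_le; have := h.s_le
  refine (le_of_not_gt fun hlt => ?_).lt_of_ne fun e => ?_
  · have hr : fract (((n + 1 : ℤ) : ℝ) * α) < fract ((r : ℝ) * α) :=
      hlt.trans_le (h.le_max s h.one_le_s h.s_le)
    have h₁ := h.le_max (n + 1 - s) (by omega) (by omega)
    have h₂ := h.min_le (n + 1 - r) (by omega) (by omega)
    rw [Int.cast_sub, sub_mul, fract_sub_of_lt hlt] at h₁
    rw [Int.cast_sub, sub_mul, fract_sub_of_lt hr] at h₂
    have hsr : fract (((n + 1 - s : ℤ) : ℝ) * α) = fract ((r : ℝ) * α) := by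
      rw [Int.cast_sub, sub_mul, fract_sub_of_lt hlt]
      linarith
    have := hα.fract_intCast_mul_injective hsr
    omega
  · have := hα.fract_intCast_mul_injective e
    omega

theorem fract_succ_lt_max (hα : Irrational α) (h : NearestReturns α n r s) (hrs : r + s ≠ n + 1) :
    fract (((n + 1 : ℤ) : ℝ) * α) < fract ((r : ℝ) * α) := by
  have := (h.neg hα).min_lt_fract_succ hα.neg (by omega)
  rw [hα.fract_intCast_mul_neg (by linarith [h.one_le_r]),
    hα.fract_intCast_mul_neg (by linarith [h.one_le_r, h.r_le])] at this
  linarith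

theorem succ (hα : Irrational α) (h : NearestReturns α n r s) (hrs : r + s ≠ n + 1) :
    NearestReturns α (n + 1) r s := by
  refine ⟨h.one_le_r, by linarith [h.r_le], h.one_le_s, by linarith [h.s_le],
    fun k hk hkn => ?_, fun k hk hkn => ?_⟩ <;> obtain hkn | rfl := (Int.le_add_one_iff.1 hkn)
  · exact h.min_le k hk hkn
  · exact (h.min_lt_fract_succ hα hrs).le
  · exact h.le_max k hk hkn
  · exact (h.fract_succ_lt_max hα hrs).le

end NearestReturns

theorem fract_add_le_or_le_of_add_eq {α : ℝ} {n r s : ℤ} (hrs : r + s = n + 1) :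
    fract (((n + 1 : ℤ) : ℝ) * α) ≤ fract ((s : ℝ) * α) ∨
      fract ((r : ℝ) * α) ≤ fract (((n + 1 : ℤ) : ℝ) * α) := by
  rw [← hrs, Int.cast_add, add_mul]
  exact fract_add_le_or_le _ _

section Sequences

variable {α : ℝ} {n r s : ℕ}

theorem bseq_le {k : ℕ} (hk : 1 ≤ k) (hkn : k ≤ n) : bseq α n ≤ fract ((k : ℝ) * α) :=
  csInf_le ⟨0, by rintro _ ⟨k, -, -, rfl⟩; exact fract_nonneg _⟩ ⟨k, hk, hkn, rfl⟩

theorem fract_le_one_sub_aseq {k : ℕ} (hk : 1 ≤ k) (hkn : k ≤ n) :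
    fract ((k : ℝ) * α) ≤ 1 - aseq α n := by
  rw [aseq, sub_sub_cancel]
  exact le_csSup ⟨1, by rintro _ ⟨k, -, -, rfl⟩; exact (fract_lt_one _).le⟩ ⟨k, hk, hkn, rfl⟩

theorem nearestReturns_of_isRIndex_of_isSIndex (hr : IsRIndex α n r)
    (hs : IsSIndex α n s) : NearestReturns α n r s := by
  refine ⟨by exact_mod_cast hr.1, by exact_mod_cast hr.2.1, by exact_mod_cast hs.1,
    by exact_mod_cast hs.2.1, fun k hk hkn => ?_, fun k hk hkn => ?_⟩ <;>
  · lift k to ℕ using by omega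
    simp only [Int.cast_natCast]
    first
    | exact hs.2.2 ▸ bseq_le (by exact_mod_cast hk) (by exact_mod_cast hkn)
    | exact hr.2.2 ▸ fract_le_one_sub_aseq (by exact_mod_cast hk) (by exact_mod_cast hkn)

theorem NearestReturns.bseq_eq (h : NearestReturns α n r s) :
    bseq α n = fract ((s : ℝ) * α) := by
  refine IsLeast.csInf_eq ⟨⟨s, by exact_mod_cast h.one_le_s, by exact_mod_cast h.s_le, rfl⟩, ?_⟩
  rintro _ ⟨k, hk, hkn, rfl⟩
  simpa using h.min_le k (by exact_mod_cast hk) (by exact_mod_cast hkn)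

theorem NearestReturns.aseq_eq (h : NearestReturns α n r s) :
    aseq α n = 1 - fract ((r : ℝ) * α) := by
  refine congrArg (1 - ·) (IsGreatest.csSup_eq
    ⟨⟨r, by exact_mod_cast h.one_le_r, by exact_mod_cast h.r_le, rfl⟩, ?_⟩)
  rintro _ ⟨k, hk, hkn, rfl⟩
  simpa using h.le_max k (by exact_mod_cast hk) (by exact_mod_cast hkn)


theorem NearestReturns.eq_of_isRIndex (hα : Irrational α) (h : NearestReturns α n r s) {r' : ℕ}
    (hr' : IsRIndex α n r') : r' = r := by
  have e : fract (((r' : ℤ) : ℝ) * α) = fract (((r : ℤ) : ℝ) * α) := by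
    simpa [h.aseq_eq] using hr'.2.2
  exact_mod_cast hα.fract_intCast_mul_injective e

theorem NearestReturns.eq_of_isSIndex (hα : Irrational α) (h : NearestReturns α n r s) {s' : ℕ}
    (hs' : IsSIndex α n s') : s' = s := by
  have e : fract (((s' : ℤ) : ℝ) * α) = fract (((s : ℤ) : ℝ) * α) := by
    simpa [h.bseq_eq] using hs'.2.2
  exact_mod_cast hα.fract_intCast_mul_injective e

theorem NearestReturns.not_isClosestReturn_iff (hα : Irrational α) (h : NearestReturns α n r s) :
    ¬ IsClosestReturn α n ↔ r + s ≠ n + 1 := by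
  have hcast : ((n : ℝ) + 1) = ((n + 1 : ℤ) : ℝ) := by push_cast; rfl
  rw [IsClosestReturn, h.aseq_eq, h.bseq_eq, sub_sub_cancel, hcast]
  refine ⟨fun hcl hrs => hcl ?_, fun hrs => ?_⟩
  · exact fract_add_le_or_le_of_add_eq (α := α) (n := n) (r := r) (s := s) (by omega)
  · have h₁ := h.min_lt_fract_succ hα (by omega)
    have h₂ := h.fract_succ_lt_max hα (by omega)
    push_cast at h₁ h₂ ⊢
    rintro (h₃ | h₃) <;> linarith

theorem fract_sub_le_of_forall_not_inArc (hα : Irrational α) {k₁ k₂ : ℕ}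
    (hgap : ∀ m ≤ n, ¬ inArc ((k₁ : ℝ) * α) ((m : ℝ) * α) ((k₂ : ℝ) * α)) {j : ℤ} (hj : j ≠ 0)
    (hk₁j : -k₁ ≤ j) (hjn : j ≤ n - k₁) :
    fract ((k₂ : ℝ) * α - (k₁ : ℝ) * α) ≤ fract ((j : ℝ) * α) := by
  obtain ⟨m, rfl⟩ : ∃ m : ℕ, j = m - k₁ := ⟨(j + k₁).toNat, by omega⟩
  have hpos := hα.fract_intCast_mul_pos hj
  push_cast at hpos ⊢
  rw [sub_mul] at hpos ⊢
  simpa [inArc, hpos] using hgap m (by omega)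

end Sequences

theorem rotation_combinatorics_general (α : ℝ) (hα : Irrational α) (n : ℕ)
    (r s : ℕ) (hr : IsRIndex α n r) (hs : IsSIndex α n s) :
    (∀ k₁ k₂ : ℕ, k₁ ≤ n → k₂ ≤ n → k₁ ≠ k₂ →
      (∀ m ≤ n, ¬ inArc ((k₁ : ℝ) * α) ((m : ℝ) * α) ((k₂ : ℝ) * α)) →
      (Int.fract ((k₂ : ℝ) * α - (k₁ : ℝ) * α) = aseq α n ∨
        Int.fract ((k₂ : ℝ) * α - (k₁ : ℝ) * α) = bseq α n ∨
        Int.fract ((k₂ : ℝ) * α - (k₁ : ℝ) * α) = aseq α n + bseq α n)) ∧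
    (r + s ≠ n + 1 ↔ ¬ IsClosestReturn α n) ∧
    (r + s ≠ n + 1 →
      aseq α (n + 1) = aseq α n ∧ bseq α (n + 1) = bseq α n ∧
      (∀ r' : ℕ, IsRIndex α (n + 1) r' → r' = r) ∧
      (∀ s' : ℕ, IsSIndex α (n + 1) s' → s' = s)) := by
  have h := nearestReturns_of_isRIndex_of_isSIndex hr hs
  refine ⟨fun k₁ k₂ hk₁ hk₂ hne hgap => ?_, (h.not_isClosestReturn_iff hα).symm, fun hrs => ?_⟩
  · have hL : fract ((k₂ : ℝ) * α - (k₁ : ℝ) * α) = fract (((k₂ - k₁ : ℤ) : ℝ) * α) := by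
      push_cast; rw [sub_mul]
    have := h.gap_length_eq hα (p := k₁) (j₀ := k₂ - k₁) (by omega) (by omega) (by omega)
      (by omega) (by omega) fun j hj h₁ h₂ =>
        hL ▸ fract_sub_le_of_forall_not_inArc hα hgap hj h₁ h₂
    rw [h.aseq_eq, h.bseq_eq, hL]
    exact_mod_cast this
  · have h' : NearestReturns α ((n + 1 : ℕ) : ℤ) r s := by
      push_cast; exact h.succ hα (by omega)
    exact ⟨by rw [h'.aseq_eq, h.aseq_eq], by rw [h'.bseq_eq, h.bseq_eq],
      fun r' => h'.eq_of_isRIndex hα, fun s' => h'.eq_of_isSIndex hα⟩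

/-- **Lemma.** For the orbit segment `{0, α, …, nα}` of the irrational rotation `R_α` :
(1) the length of each connected component of the complement of the orbit segment
belongs to `{a_n, b_n, a_n + b_n}` ;
(2) `r_n + s_n ≠ n + 1` iff `(n+1)α ∉ [-a_n, b_n]` (mod 1), in which case
`a_{n+1} = a_n`, `b_{n+1} = b_n`, `r_{n+1} = r_n` and `s_{n+1} = s_n`. -/
theorem rotation_combinatorics (α : ℝ) (hα : Irrational α) (n : ℕ) (hn : 1 ≤ n)
    (r s : ℕ) (hr : IsRIndex α n r) (hs : IsSIndex α n s) :
    (∀ k₁ k₂ : ℕ, k₁ ≤ n → k₂ ≤ n → k₁ ≠ k₂ →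
      (∀ m ≤ n, ¬ inArc ((k₁ : ℝ) * α) ((m : ℝ) * α) ((k₂ : ℝ) * α)) →
      (Int.fract ((k₂ : ℝ) * α - (k₁ : ℝ) * α) = aseq α n ∨
        Int.fract ((k₂ : ℝ) * α - (k₁ : ℝ) * α) = bseq α n ∨
        Int.fract ((k₂ : ℝ) * α - (k₁ : ℝ) * α) = aseq α n + bseq α n)) ∧
    (r + s ≠ n + 1 ↔ ¬ IsClosestReturn α n) ∧
    (r + s ≠ n + 1 →
      aseq α (n + 1) = aseq α n ∧ bseq α (n + 1) = bseq α n ∧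
      (∀ r' : ℕ, IsRIndex α (n + 1) r' → r' = r) ∧
      (∀ s' : ℕ, IsSIndex α (n + 1) s' → s' = s)) :=
  rotation_combinatorics_general α hα n r s hr hs
end

section
/- Let α be irrational and let (n_i) be the increasing sequence of all integers n such that (n+1)α ∈ [−a_n, b_n] (mod 1). Then there is a subsequence (n_{i_j}) of (n_i) such that a_{n_{i_j}} / b_{n_{i_j}} ∈ [1/2, 2] for every j. -/
open Set Filter

/-! If `ρα` and `σα` are the left and right neighbours of `0` in `{α, …, nα}` and
`ρ + σ = n + 1`, then `(n+1)α = ρα + σα ≡ b_n - a_n`, so `n` is a closest return time and the new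
point `(n+1)α` replaces the neighbour on the side of the larger gap: the gaps become
`(a_n, b_n - a_n)` or `(a_n - b_n, b_n)`. No later point enters the new gap before the sum of the
two new neighbour indices, since such a point could be translated back by one of the two indices
to an earlier point inside the gap. So the same situation recurs, and along these times the pair
`(a_n, b_n)` runs through the subtractive Euclidean algorithm, which from an unbalanced pair keeps
subtracting the smaller gap until the ratio lies in `[1/2, 2]`. -/

noncomputable def fr (α : ℝ) (k : ℕ) : ℝ := Int.fract ((k : ℝ) * α)

section OrbitFract

variable {α : ℝ}

lemma fr_nonneg (α : ℝ) (k : ℕ) : 0 ≤ fr α k := Int.fract_nonneg _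

lemma fr_lt_one (α : ℝ) (k : ℕ) : fr α k < 1 := Int.fract_lt_one _

lemma fr_add (α : ℝ) (k l : ℕ) : fr α (k + l) = Int.fract (fr α k + fr α l) :=
  Int.fract_eq_fract.2 ⟨⌊(k : ℝ) * α⌋ + ⌊(l : ℝ) * α⌋, by simp only [fr, Int.fract]; push_cast; ring⟩

lemma fr_sub (α : ℝ) {k l : ℕ} (h : l ≤ k) : fr α (k - l) = Int.fract (fr α k - fr α l) :=
  Int.fract_eq_fract.2
    ⟨⌊(k : ℝ) * α⌋ - ⌊(l : ℝ) * α⌋, by simp only [fr, Int.fract]; push_cast [h]; ring⟩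

lemma fr_add_of_lt_one {k l : ℕ} (h : fr α k + fr α l < 1) : fr α (k + l) = fr α k + fr α l := by
  rw [fr_add, Int.fract_eq_self.2 ⟨by linarith [fr_nonneg α k, fr_nonneg α l], h⟩]

lemma fr_add_of_one_le {k l : ℕ} (h : 1 ≤ fr α k + fr α l) :
    fr α (k + l) = fr α k + fr α l - 1 := by
  rw [fr_add, ← Int.fract_sub_one,
    Int.fract_eq_self.2 ⟨by linarith, by linarith [fr_lt_one α k, fr_lt_one α l]⟩]

lemma fr_sub_of_le {k l : ℕ} (hlk : l ≤ k) (h : fr α l ≤ fr α k) :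
    fr α (k - l) = fr α k - fr α l := by
  rw [fr_sub α hlk, Int.fract_eq_self.2 ⟨by linarith, by linarith [fr_lt_one α k, fr_nonneg α l]⟩]

lemma fr_sub_of_lt {k l : ℕ} (hlk : l ≤ k) (h : fr α k < fr α l) :
    fr α (k - l) = fr α k - fr α l + 1 := by
  rw [fr_sub α hlk, ← Int.fract_add_one,
    Int.fract_eq_self.2 ⟨by linarith [fr_nonneg α k, fr_lt_one α l], by linarith⟩]

lemma Irrational.fr_injective (hα : Irrational α) : Function.Injective (fr α) := by
  intro k l h
  by_contra hkl
  obtain ⟨z, hz⟩ := Int.fract_eq_fract.1 h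
  have hirr : Irrational (((k - l : ℤ) : ℝ) * α) :=
    hα.intCast_mul (sub_ne_zero.2 (by exact_mod_cast hkl))
  exact hirr.ne_int z (by push_cast; linarith)

lemma Irrational.fr_pos (hα : Irrational α) {k : ℕ} (hk : 1 ≤ k) : 0 < fr α k :=
  (fr_nonneg α k).lt_of_ne' (by simpa [fr] using hα.fr_injective.ne (show k ≠ 0 by omega))

end OrbitFract

/-- `ρα` and `σα` are the left and right neighbours of `0` in the orbit segment `{α, …, nα}`. -/
structure Neighbours (α : ℝ) (n ρ σ : ℕ) : Prop where
  one_le_left : 1 ≤ ρ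
  left_le : ρ ≤ n
  one_le_right : 1 ≤ σ
  right_le : σ ≤ n
  fr_le_left : ∀ k, 1 ≤ k → k ≤ n → fr α k ≤ fr α ρ
  right_le_fr : ∀ k, 1 ≤ k → k ≤ n → fr α σ ≤ fr α k

namespace Neighbours

variable {α : ℝ} {m n ρ σ : ℕ}

lemma one (α : ℝ) : Neighbours α 1 1 1 where
  one_le_left := le_rfl
  left_le := le_rfl
  one_le_right := le_rfl
  right_le := le_rfl
  fr_le_left k _ _ := (congrArg (fr α) (by omega : k = 1)).le
  right_le_fr k _ _ := (congrArg (fr α) (by omega : k = 1)).ge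

lemma bseq_eq (h : Neighbours α n ρ σ) : bseq α n = fr α σ :=
  IsLeast.csInf_eq ⟨⟨σ, h.one_le_right, h.right_le, rfl⟩,
    by rintro _ ⟨k, hk, hkn, rfl⟩; exact h.right_le_fr k hk hkn⟩

lemma aseq_eq (h : Neighbours α n ρ σ) : aseq α n = 1 - fr α ρ :=
  congrArg (1 - ·) <| IsGreatest.csSup_eq ⟨⟨ρ, h.one_le_left, h.left_le, rfl⟩,
    by rintro _ ⟨k, hk, hkn, rfl⟩; exact h.fr_le_left k hk hkn⟩

lemma aseq_pos (h : Neighbours α n ρ σ) : 0 < aseq α n := by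
  rw [h.aseq_eq]; linarith [fr_lt_one α ρ]

lemma bseq_pos (hα : Irrational α) (h : Neighbours α n ρ σ) : 0 < bseq α n :=
  h.bseq_eq ▸ hα.fr_pos h.one_le_right

lemma succ_of_lt_right (h : Neighbours α n ρ σ) (hlt : fr α (n + 1) < fr α σ) :
    Neighbours α (n + 1) ρ (n + 1) where
  one_le_left := h.one_le_left
  left_le := by have := h.left_le; omega
  one_le_right := by omega
  right_le := le_rfl
  fr_le_left k hk hkn := by
    rcases Nat.lt_or_ge k (n + 1) with hkn' | hkn'
    · exact h.fr_le_left k hk (by omega)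
    · obtain rfl : k = n + 1 := by omega
      linarith [h.right_le_fr ρ h.one_le_left h.left_le]
  right_le_fr k hk hkn := by
    rcases Nat.lt_or_ge k (n + 1) with hkn' | hkn'
    · linarith [h.right_le_fr k hk (by omega)]
    · obtain rfl : k = n + 1 := by omega
      exact le_rfl

lemma succ_of_left_lt (h : Neighbours α n ρ σ) (hlt : fr α ρ < fr α (n + 1)) :
    Neighbours α (n + 1) (n + 1) σ where
  one_le_left := by omega
  left_le := le_rfl
  one_le_right := h.one_le_right
  right_le := by have := h.right_le; omega
  fr_le_left k hk hkn := by
    rcases Nat.lt_or_ge k (n + 1) with hkn' | hkn'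
    · linarith [h.fr_le_left k hk (by omega)]
    · obtain rfl : k = n + 1 := by omega
      exact le_rfl
  right_le_fr k hk hkn := by
    rcases Nat.lt_or_ge k (n + 1) with hkn' | hkn'
    · exact h.right_le_fr k hk (by omega)
    · obtain rfl : k = n + 1 := by omega
      linarith [h.right_le_fr ρ h.one_le_left h.left_le]

/-- The point `(ρ + σ)α` splits the gap `(ρα, σα)` around `0`: a point `kα` of the gap on one
side of it is moved back into the gap by `-ρα`, on the other side by `-σα`. -/
lemma exists_sub_mem_gap (hα : Irrational α) (h : Neighbours α m ρ σ) {k : ℕ} (hmk : m < k)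
    (hk : k < ρ + σ) (hgap : fr α k < fr α σ ∨ fr α ρ < fr α k) :
    ∃ j, 1 ≤ j ∧ j < k ∧ (fr α j < fr α σ ∨ fr α ρ < fr α j) := by
  have hσρ := h.right_le_fr ρ h.one_le_left h.left_le
  have hne : fr α k ≠ fr α (ρ + σ) := hα.fr_injective.ne hk.ne
  have hρk : ρ < k := h.left_le.trans_lt hmk
  have hσk : σ < k := h.right_le.trans_lt hmk
  have := h.one_le_left
  have := h.one_le_right
  have := fr_lt_one α ρ
  have := fr_lt_one α k
  have := fr_nonneg α σ
  have := fr_nonneg α k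
  rcases hgap with hright | hleft
  · rcases lt_trichotomy (fr α k) (fr α ρ + fr α σ - 1) with hlt | heq | hgt
    · refine ⟨k - ρ, by omega, by omega, Or.inl ?_⟩
      rw [fr_sub_of_lt hρk.le (by linarith)]; linarith
    · exact absurd (heq.trans (fr_add_of_one_le (by linarith)).symm) hne
    · refine ⟨k - σ, by omega, by omega, Or.inr ?_⟩
      rw [fr_sub_of_lt hσk.le hright]; linarith
  · rcases lt_trichotomy (fr α k) (fr α ρ + fr α σ) with hlt | heq | hgt
    · refine ⟨k - ρ, by omega, by omega, Or.inl ?_⟩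
      rw [fr_sub_of_le hρk.le hleft.le]; linarith
    · exact absurd (heq.trans (fr_add_of_lt_one (by linarith)).symm) hne
    · refine ⟨k - σ, by omega, by omega, Or.inr ?_⟩
      rw [fr_sub_of_le hσk.le (by linarith)]; linarith

lemma of_le_of_lt_add (hα : Irrational α) (h : Neighbours α m ρ σ) (hmn : m ≤ n)
    (hn : n < ρ + σ) : Neighbours α n ρ σ := by
  suffices hout : ∀ k, 1 ≤ k → k < ρ + σ → fr α σ ≤ fr α k ∧ fr α k ≤ fr α ρ from
    { one_le_left := h.one_le_left
      left_le := h.left_le.trans hmn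
      one_le_right := h.one_le_right
      right_le := h.right_le.trans hmn
      fr_le_left := fun k hk hkn => (hout k hk (by omega)).2
      right_le_fr := fun k hk hkn => (hout k hk (by omega)).1 }
  intro k
  induction k using Nat.strong_induction_on with
  | _ k ih =>
    intro hk hkρσ
    rcases le_or_gt k m with hkm | hmk
    · exact ⟨h.right_le_fr k hk hkm, h.fr_le_left k hk hkm⟩
    · by_contra hgap
      obtain ⟨j, hj, hjk, hjgap⟩ :=
        h.exists_sub_mem_gap hα hmk hkρσ (by rw [not_and_or, not_le, not_le] at hgap; exact hgap)
      have := ih j hjk hj (by omega)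
      rcases hjgap with hj' | hj' <;> linarith [this.1, this.2]

end Neighbours

/-- `(n+1)α = ρα + σα ≡ b_n - a_n` lands in `[-a_n, b_n]`, so `n` is a closest return time. -/
structure ClosestReturnPair (α : ℝ) (n ρ σ : ℕ) : Prop extends Neighbours α n ρ σ where
  add_eq : ρ + σ = n + 1

namespace ClosestReturnPair

variable {α : ℝ} {n ρ σ : ℕ}

lemma one (α : ℝ) : ClosestReturnPair α 1 1 1 := ⟨Neighbours.one α, rfl⟩

lemma one_le (h : ClosestReturnPair α n ρ σ) : 1 ≤ n :=
  h.one_le_left.trans h.left_le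

lemma isClosestReturn (h : ClosestReturnPair α n ρ σ) : IsClosestReturn α n := by
  have hcast : Int.fract (((n : ℝ) + 1) * α) = fr α (n + 1) := by simp [fr]
  rw [IsClosestReturn, h.bseq_eq, h.aseq_eq, sub_sub_cancel, hcast, ← h.add_eq]
  rcases lt_or_ge (fr α ρ + fr α σ) 1 with hlt | hge
  · exact Or.inr (by rw [fr_add_of_lt_one hlt]; linarith [fr_nonneg α σ])
  · exact Or.inl (by rw [fr_add_of_one_le hge]; linarith [fr_lt_one α ρ])

lemma aseq_ne_bseq (hα : Irrational α) (h : ClosestReturnPair α n ρ σ) :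
    aseq α n ≠ bseq α n := by
  rw [h.aseq_eq, h.bseq_eq]
  intro heq
  have hpos := hα.fr_pos (show 1 ≤ ρ + σ by have := h.one_le_left; omega)
  rw [fr_add, show fr α ρ + fr α σ = 1 by linarith, Int.fract_one] at hpos
  exact hpos.false

lemma exists_next_of_aseq_lt (hα : Irrational α) (h : ClosestReturnPair α n ρ σ)
    (hab : aseq α n < bseq α n) :
    ∃ n' ρ' σ', n < n' ∧ ClosestReturnPair α n' ρ' σ' ∧
      aseq α n' = aseq α n ∧ bseq α n' = bseq α n - aseq α n := by
  rw [h.aseq_eq, h.bseq_eq] at hab ⊢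
  have := h.one_le_left
  have hsucc : fr α (n + 1) = fr α ρ + fr α σ - 1 := by
    rw [← h.add_eq]; exact fr_add_of_one_le (by linarith)
  have hnext : Neighbours α (n + ρ) ρ (n + 1) :=
    (h.succ_of_lt_right (by linarith [fr_lt_one α ρ])).of_le_of_lt_add hα
      (by omega) (by omega)
  refine ⟨n + ρ, ρ, n + 1, by omega, ⟨hnext, by omega⟩, hnext.aseq_eq, ?_⟩
  rw [hnext.bseq_eq, hsucc]; ring

lemma exists_next_of_bseq_lt (hα : Irrational α) (h : ClosestReturnPair α n ρ σ)
    (hba : bseq α n < aseq α n) :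
    ∃ n' ρ' σ', n < n' ∧ ClosestReturnPair α n' ρ' σ' ∧
      aseq α n' = aseq α n - bseq α n ∧ bseq α n' = bseq α n := by
  rw [h.aseq_eq, h.bseq_eq] at hba ⊢
  have := h.one_le_right
  have hsucc : fr α (n + 1) = fr α ρ + fr α σ := by
    rw [← h.add_eq]; exact fr_add_of_lt_one (by linarith)
  have hnext : Neighbours α (n + σ) (n + 1) σ :=
    (h.succ_of_left_lt (by linarith [hα.fr_pos h.one_le_right])).of_le_of_lt_add hα
      (by omega) (by omega)
  refine ⟨n + σ, n + 1, σ, by omega, ⟨hnext, by omega⟩, ?_, hnext.bseq_eq⟩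
  rw [hnext.aseq_eq, hsucc]; ring

lemma exists_next (hα : Irrational α) (h : ClosestReturnPair α n ρ σ) :
    ∃ n' ρ' σ', n < n' ∧ ClosestReturnPair α n' ρ' σ' := by
  rcases (h.aseq_ne_bseq hα).lt_or_gt with hab | hba
  · obtain ⟨n', ρ', σ', hnn', h', -⟩ := h.exists_next_of_aseq_lt hα hab
    exact ⟨n', ρ', σ', hnn', h'⟩
  · obtain ⟨n', ρ', σ', hnn', h', -⟩ := h.exists_next_of_bseq_lt hα hba
    exact ⟨n', ρ', σ', hnn', h'⟩

end ClosestReturnPair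

section Descent

variable {α : ℝ}

lemma exists_closestReturnPair_ge (hα : Irrational α) (N : ℕ) :
    ∃ n ρ σ, N ≤ n ∧ ClosestReturnPair α n ρ σ := by
  induction N with
  | zero => exact ⟨1, 1, 1, by omega, ClosestReturnPair.one α⟩
  | succ N ih =>
    obtain ⟨n, ρ, σ, hNn, h⟩ := ih
    obtain ⟨n', ρ', σ', hnn', h'⟩ := h.exists_next hα
    exact ⟨n', ρ', σ', by omega, h'⟩

/-- Each subtractive step lowers the bound `K` on both ratios `a_n / b_n` and `b_n / a_n` by one,
as long as the pair is unbalanced. -/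
lemma exists_balanced_of_le_mul (hα : Irrational α) (K : ℕ) {n ρ σ : ℕ}
    (h : ClosestReturnPair α n ρ σ) (ha : aseq α n ≤ K * bseq α n)
    (hb : bseq α n ≤ K * aseq α n) :
    ∃ n' ρ' σ', n ≤ n' ∧ ClosestReturnPair α n' ρ' σ' ∧
      aseq α n' ≤ 2 * bseq α n' ∧ bseq α n' ≤ 2 * aseq α n' := by
  induction K generalizing n ρ σ with
  | zero => simp only [CharP.cast_eq_zero, zero_mul] at ha; linarith [h.aseq_pos]
  | succ K ih =>
    have hapos := h.aseq_pos
    have hbpos := h.bseq_pos hα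
    push_cast at ha hb
    by_cases hba : bseq α n ≤ 2 * aseq α n
    · by_cases hab : aseq α n ≤ 2 * bseq α n
      · exact ⟨n, ρ, σ, le_rfl, h, hab, hba⟩
      obtain ⟨n', ρ', σ', hnn', h', ha', hb'⟩ := h.exists_next_of_bseq_lt hα (by linarith)
      have hK : (1 : ℝ) ≤ K := by nlinarith
      obtain ⟨m, ρ'', σ'', hn'm, hm⟩ := ih h' (by rw [ha', hb']; linarith)
        (by rw [ha', hb']; nlinarith)
      exact ⟨m, ρ'', σ'', hnn'.le.trans hn'm, hm⟩
    · obtain ⟨n', ρ', σ', hnn', h', ha', hb'⟩ := h.exists_next_of_aseq_lt hα (by linarith)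
      have hK : (1 : ℝ) ≤ K := by nlinarith
      obtain ⟨m, ρ'', σ'', hn'm, hm⟩ := ih h' (by rw [ha', hb']; nlinarith)
        (by rw [ha', hb']; linarith)
      exact ⟨m, ρ'', σ'', hnn'.le.trans hn'm, hm⟩

lemma ClosestReturnPair.exists_balanced (hα : Irrational α) {n ρ σ : ℕ}
    (h : ClosestReturnPair α n ρ σ) :
    ∃ n' ρ' σ', n ≤ n' ∧ ClosestReturnPair α n' ρ' σ' ∧
      aseq α n' ≤ 2 * bseq α n' ∧ bseq α n' ≤ 2 * aseq α n' := by
  obtain ⟨K, hK⟩ := exists_nat_ge (max (aseq α n / bseq α n) (bseq α n / aseq α n))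
  exact exists_balanced_of_le_mul hα K h
    ((div_le_iff₀ (h.bseq_pos hα)).1 ((le_max_left _ _).trans hK))
    ((div_le_iff₀ h.aseq_pos).1 ((le_max_right _ _).trans hK))

end Descent

lemma div_mem_Icc_half_two {a b : ℝ} (hb : 0 < b) (hab : a ≤ 2 * b) (hba : b ≤ 2 * a) :
    a / b ∈ Icc (1 / 2 : ℝ) 2 :=
  ⟨(le_div_iff₀ hb).2 (by linarith), (div_le_iff₀ hb).2 hab⟩

/-- **Lemma.** Among the closest return times `n` (those with `(n+1)α ∈ [-a_n, b_n]` mod 1)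
there are infinitely many with `a_n / b_n ∈ [1/2, 2]` ; equivalently, the increasing
sequence of all closest return times admits a subsequence along which
`a_n / b_n ∈ [1/2, 2]`. -/
theorem balanced_closest_returns (α : ℝ) (hα : Irrational α) :
    ∀ N : ℕ, ∃ n : ℕ, N ≤ n ∧ 1 ≤ n ∧ IsClosestReturn α n ∧
      aseq α n / bseq α n ∈ Icc (1 / 2 : ℝ) 2 := by
  intro N
  obtain ⟨n, ρ, σ, hNn, h⟩ := exists_closestReturnPair_ge hα N
  obtain ⟨n', ρ', σ', hnn', h', hab, hba⟩ := h.exists_balanced hα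
  exact ⟨n', hNn.trans hnn', h'.one_le, h'.isClosestReturn,
    div_mem_Icc_half_two (h'.bseq_pos hα) hab hba⟩
end

section
/- Let α be irrational. There exists a strictly increasing sequence (N_i) of integers such that each N_i + 1 is a closest return time (i.e. (N_i + 1)α ∈ [−a_{N_i}, b_{N_i}] mod 1) and, for every i, either a_{N_i} < b_{N_i} and r_{N_i} ≤ 2 s_{N_i}, or a_{N_i} > b_{N_i} and s_{N_i} ≤ 2 r_{N_i}. -/
open Set Filter

/-!
Write `{x}` for the fractional part. Suppose `r, s ≤ n` index the largest and the smallest of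
`{α}, …, {nα}`, so that `{rα} = 1 - a_n` and `{sα} = b_n`, and suppose `n + 1 = r + s`. Then
`(n+1)α = rα + sα` equals `b_n - a_n` mod 1, so `n + 1` is a closest return time, and it becomes
the new neighbour of `0` on the side of the farther one of `-a_n`, `b_n`. No further point
enters the gap around `0` before the time at which the indices of the two neighbours add up
again, and this happens at `n + r` (new indices `r`, `n + 1`) or at `n + s` (new indices
`n + 1`, `s`). So such configurations occur for arbitrarily large `n`, and an unbalanced one,
say `a_n < b_n` and `r > 2s`, is followed by the indices `r`, `r + s`, which are balanced
whichever side is nearer to `0`.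
-/

noncomputable def orbitPoint (α : ℝ) (k : ℕ) : ℝ := Int.fract (k * α)

section OrbitPoint

variable {α : ℝ}

lemma orbitPoint_nonneg (α : ℝ) (k : ℕ) : 0 ≤ orbitPoint α k := Int.fract_nonneg _

lemma orbitPoint_lt_one (α : ℝ) (k : ℕ) : orbitPoint α k < 1 := Int.fract_lt_one _

lemma orbitPoint_pos (hα : Irrational α) {k : ℕ} (hk : k ≠ 0) : 0 < orbitPoint α k := by
  refine (orbitPoint_nonneg α k).lt_of_ne' fun h => ?_
  obtain ⟨z, hz⟩ := Int.fract_eq_zero_iff.1 h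
  exact (hα.natCast_mul hk).ne_int z hz.symm

lemma orbitPoint_injective (hα : Irrational α) : Function.Injective (orbitPoint α) := by
  intro j k h
  obtain ⟨z, hz⟩ := Int.fract_eq_fract.1 h
  by_contra hjk
  have hjk' : (j : ℤ) - k ≠ 0 := sub_ne_zero.2 (Nat.cast_injective.ne hjk)
  refine (hα.intCast_mul hjk').ne_int z ?_
  push_cast
  linarith

lemma orbitPoint_add (α : ℝ) (j k : ℕ) :
    orbitPoint α (j + k) = orbitPoint α j + orbitPoint α k ∨
      orbitPoint α (j + k) = orbitPoint α j + orbitPoint α k - 1 := by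
  obtain ⟨z, hz⟩ := Int.fract_add (j * α) (k * α)
  have hsum : orbitPoint α (j + k) = orbitPoint α j + orbitPoint α k + z := by
    rw [← hz, orbitPoint, orbitPoint, orbitPoint, Nat.cast_add, add_mul]
    ring
  have hlo : -2 < (z : ℝ) := by
    linarith [orbitPoint_nonneg α (j + k), orbitPoint_lt_one α j, orbitPoint_lt_one α k]
  have hhi : (z : ℝ) < 1 := by
    linarith [orbitPoint_lt_one α (j + k), orbitPoint_nonneg α j, orbitPoint_nonneg α k]
  obtain rfl | rfl : z = 0 ∨ z = -1 := by
    have : -2 < z := by exact_mod_cast hlo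
    have : z < 1 := by exact_mod_cast hhi
    omega
  · left; simpa using hsum
  · right; simpa [sub_eq_add_neg] using hsum

lemma orbitPoint_add_ne_one (hα : Irrational α) {j k : ℕ} (hjk : j + k ≠ 0) :
    orbitPoint α j + orbitPoint α k ≠ 1 := by
  intro h
  have := orbitPoint_pos hα hjk
  rcases orbitPoint_add α j k with h' | h' <;>
    linarith [orbitPoint_lt_one α (j + k)]

lemma orbitPoint_neg (hα : Irrational α) {k : ℕ} (hk : k ≠ 0) :
    orbitPoint (-α) k = 1 - orbitPoint α k := by
  rw [orbitPoint, mul_neg, Int.fract_neg (orbitPoint_pos hα hk).ne', orbitPoint]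

end OrbitPoint

/-- `r` and `s` index the neighbours of `0` in `{α, …, nα}` on the left and on the right. -/
structure IsClosestPair (α : ℝ) (n r s : ℕ) : Prop where
  left_mem : r ∈ Icc 1 n
  right_mem : s ∈ Icc 1 n
  le_left : ∀ k ∈ Icc 1 n, orbitPoint α k ≤ orbitPoint α r
  right_le : ∀ k ∈ Icc 1 n, orbitPoint α s ≤ orbitPoint α k

def IsBalancedReturn (α : ℝ) (n : ℕ) : Prop :=
  1 ≤ n ∧ IsClosestReturn α n ∧ ∀ r s : ℕ, IsRIndex α n r → IsSIndex α n s →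
    (aseq α n < bseq α n ∧ r ≤ 2 * s) ∨ (bseq α n < aseq α n ∧ s ≤ 2 * r)

lemma isClosestPair_one (α : ℝ) : IsClosestPair α 1 1 1 := by
  have hk : ∀ k ∈ Icc 1 1, k = 1 := fun k hk => le_antisymm hk.2 hk.1
  exact ⟨⟨le_rfl, le_rfl⟩, ⟨le_rfl, le_rfl⟩, fun k h => (hk k h).symm ▸ le_rfl,
    fun k h => (hk k h).symm ▸ le_rfl⟩

namespace IsClosestPair

variable {α : ℝ} {n r s : ℕ}

lemma bseq_eq (h : IsClosestPair α n r s) : bseq α n = orbitPoint α s :=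
  IsLeast.csInf_eq ⟨⟨s, h.right_mem.1, h.right_mem.2, rfl⟩,
    by rintro _ ⟨k, hk₁, hk₂, rfl⟩; exact h.right_le k ⟨hk₁, hk₂⟩⟩

lemma aseq_eq (h : IsClosestPair α n r s) : aseq α n = 1 - orbitPoint α r := by
  have hmax :
      IsGreatest {t | ∃ k, 1 ≤ k ∧ k ≤ n ∧ t = Int.fract (k * α)} (orbitPoint α r) :=
    ⟨⟨r, h.left_mem.1, h.left_mem.2, rfl⟩,
      by rintro _ ⟨k, hk₁, hk₂, rfl⟩; exact h.le_left k ⟨hk₁, hk₂⟩⟩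
  rw [aseq, hmax.csSup_eq]

lemma eq_of_isRIndex (hα : Irrational α) (h : IsClosestPair α n r s) {r' : ℕ}
    (hr' : IsRIndex α n r') : r' = r :=
  orbitPoint_injective hα <| hr'.2.2.trans (by rw [h.aseq_eq, sub_sub_cancel])

lemma eq_of_isSIndex (hα : Irrational α) (h : IsClosestPair α n r s) {s' : ℕ}
    (hs' : IsSIndex α n s') : s' = s :=
  orbitPoint_injective hα <| hs'.2.2.trans h.bseq_eq

lemma neg (hα : Irrational α) (h : IsClosestPair α n r s) : IsClosestPair (-α) n s r := by
  have hneg : ∀ k ∈ Icc 1 n, orbitPoint (-α) k = 1 - orbitPoint α k := fun k hk =>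
    orbitPoint_neg hα (by have := hk.1; omega)
  refine ⟨h.right_mem, h.left_mem, fun k hk => ?_, fun k hk => ?_⟩ <;>
    simp only [hneg k hk, hneg _ h.left_mem, hneg _ h.right_mem] <;>
    linarith [h.le_left k hk, h.right_le k hk]

lemma isClosestReturn (h : IsClosestPair α n r s) (hn : n + 1 = r + s) :
    IsClosestReturn α n := by
  have hfract : Int.fract (((n : ℝ) + 1) * α) = orbitPoint α (r + s) := by
    rw [← hn, orbitPoint, Nat.cast_succ]
  rw [IsClosestReturn, hfract, h.bseq_eq, h.aseq_eq, sub_sub_cancel]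
  rcases orbitPoint_add α r s with h' | h'
  · exact Or.inr (by linarith [orbitPoint_nonneg α s])
  · exact Or.inl (by linarith [orbitPoint_lt_one α r])

/-- If `mα` fell into `(0, b_n)`, then `(m - r)α` would lie in `(a_n, a_n + b_n)` and
`(s - (m - r))α` in `(-a_n, b_n - a_n)`, both indices lying in `[1, n]`. -/
lemma right_lt_of_lt_add (hα : Irrational α) (h : IsClosestPair α n r s) {m : ℕ}
    (hnm : n < m) (hm : m < r + s) : orbitPoint α s < orbitPoint α m := by
  obtain ⟨⟨hr₁, hrn⟩, ⟨hs₁, hsn⟩, hle, hge⟩ := h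
  have hne : orbitPoint α m ≠ orbitPoint α s := (orbitPoint_injective hα).ne (by omega)
  refine lt_of_le_of_ne (not_lt.1 fun hlt => ?_) hne.symm
  obtain ⟨k, rfl⟩ : ∃ k, m = k + r := ⟨m - r, by omega⟩
  obtain ⟨j, hj⟩ : ∃ j, s = j + k := ⟨s - k, by omega⟩
  have hk : k ∈ Icc 1 n := ⟨by omega, by omega⟩
  have hj' : j ∈ Icc 1 n := ⟨by omega, by omega⟩
  have := orbitPoint_pos hα (show k ≠ 0 by omega)
  have := orbitPoint_lt_one α r
  have hjk := orbitPoint_add α j k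
  rw [← hj] at hjk
  rcases orbitPoint_add α k r with h₁ | h₁ <;> rcases hjk with h₂ | h₂ <;>
    linarith [hge k hk, hge j hj', hle j hj']

lemma lt_left_of_lt_add (hα : Irrational α) (h : IsClosestPair α n r s) {m : ℕ}
    (hnm : n < m) (hm : m < r + s) : orbitPoint α m < orbitPoint α r := by
  have := (h.neg hα).right_lt_of_lt_add hα.neg hnm (by omega)
  rwa [orbitPoint_neg hα (k := m) (by omega),
    orbitPoint_neg hα (k := r) (by have := h.left_mem.1; omega),
    sub_lt_sub_iff_left] at this

lemma mono (hα : Irrational α) (h : IsClosestPair α n r s) {m : ℕ} (hnm : n ≤ m)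
    (hm : m < r + s) : IsClosestPair α m r s := by
  have hk : ∀ k ∈ Icc 1 m, k ∈ Icc 1 n ∨ n < k := fun k hk =>
    (le_or_gt k n).imp (fun h => ⟨hk.1, h⟩) id
  refine ⟨⟨h.left_mem.1, h.left_mem.2.trans hnm⟩,
    ⟨h.right_mem.1, h.right_mem.2.trans hnm⟩,
    fun k hkm => ?_, fun k hkm => ?_⟩ <;> rcases hk k hkm with hkn | hkn
  · exact h.le_left k hkn
  · exact (h.lt_left_of_lt_add hα hkn (by have := hkm.2; omega)).le
  · exact h.right_le k hkn
  · exact (h.right_lt_of_lt_add hα hkn (by have := hkm.2; omega)).le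

lemma succ_of_lt_right (h : IsClosestPair α n r s)
    (hlt : orbitPoint α (n + 1) < orbitPoint α s) :
    IsClosestPair α (n + 1) r (n + 1) := by
  have hk : ∀ k ∈ Icc 1 (n + 1), k ∈ Icc 1 n ∨ k = n + 1 := fun k hk =>
    (Nat.lt_or_ge k (n + 1)).imp (fun h => ⟨hk.1, by omega⟩) (fun h => by have := hk.2; omega)
  have hsr := h.le_left s h.right_mem
  refine ⟨⟨h.left_mem.1, h.left_mem.2.trans n.le_succ⟩, ⟨by omega, le_rfl⟩,
    fun k hkm => ?_, fun k hkm => ?_⟩ <;> rcases hk k hkm with hkn | rfl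
  · exact h.le_left k hkn
  · exact (hlt.trans_le hsr).le
  · exact hlt.le.trans (h.right_le k hkn)
  · exact le_rfl

/-- The hypothesis `1 < {rα} + {sα}` says `a_n < b_n`; then `(n+1)α` lands in `(0, b_n)`. -/
lemma next_of_one_lt (hα : Irrational α) (h : IsClosestPair α n r s) (hn : n + 1 = r + s)
    (hrs : 1 < orbitPoint α r + orbitPoint α s) : IsClosestPair α (n + r) r (n + 1) := by
  have hnext : orbitPoint α (n + 1) = orbitPoint α r + orbitPoint α s - 1 := by
    rw [hn]
    exact (orbitPoint_add α r s).resolve_left fun h' => by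
      linarith [orbitPoint_lt_one α (r + s)]
  exact (h.succ_of_lt_right (by linarith [orbitPoint_lt_one α r])).mono hα
    (by have := h.left_mem.1; omega) (by omega)

lemma next_of_lt_one (hα : Irrational α) (h : IsClosestPair α n r s) (hn : n + 1 = r + s)
    (hrs : orbitPoint α r + orbitPoint α s < 1) : IsClosestPair α (n + s) (n + 1) s := by
  have hr : r ≠ 0 := by have := h.left_mem.1; omega
  have hs : s ≠ 0 := by have := h.right_mem.1; omega
  have hrs' : 1 < orbitPoint (-α) s + orbitPoint (-α) r := by
    rw [orbitPoint_neg hα hr, orbitPoint_neg hα hs]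
    linarith
  simpa using ((h.neg hα).next_of_one_lt hα.neg (by omega) hrs').neg hα.neg

lemma isBalancedReturn (hα : Irrational α) (h : IsClosestPair α n r s) (hn : n + 1 = r + s)
    (hbal : (1 < orbitPoint α r + orbitPoint α s ∧ r ≤ 2 * s) ∨
      (orbitPoint α r + orbitPoint α s < 1 ∧ s ≤ 2 * r)) :
    IsBalancedReturn α n := by
  refine ⟨h.left_mem.1.trans h.left_mem.2, h.isClosestReturn hn, fun r' s' hr' hs' => ?_⟩
  rw [h.eq_of_isRIndex hα hr', h.eq_of_isSIndex hα hs', h.aseq_eq, h.bseq_eq]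
  rcases hbal with ⟨hlt, hrs⟩ | ⟨hlt, hrs⟩
  · exact Or.inl ⟨by linarith, hrs⟩
  · exact Or.inr ⟨by linarith, hrs⟩

end IsClosestPair

lemma exists_isClosestPair_ge {α : ℝ} (hα : Irrational α) (m : ℕ) :
    ∃ n r s, m ≤ n ∧ n + 1 = r + s ∧ IsClosestPair α n r s := by
  induction m with
  | zero => exact ⟨1, 1, 1, by omega, rfl, isClosestPair_one α⟩
  | succ m ih =>
    obtain ⟨n, r, s, hmn, hn, h⟩ := ih
    have hr := h.left_mem.1
    have hs := h.right_mem.1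
    rcases (orbitPoint_add_ne_one hα (j := r) (k := s) (by omega)).lt_or_gt with hrs | hrs
    · exact ⟨n + s, n + 1, s, by omega, by omega, h.next_of_lt_one hα hn hrs⟩
    · exact ⟨n + r, r, n + 1, by omega, by omega, h.next_of_one_lt hα hn hrs⟩

lemma exists_isBalancedReturn_ge {α : ℝ} (hα : Irrational α) (m : ℕ) :
    ∃ n, m ≤ n ∧ IsBalancedReturn α n := by
  obtain ⟨n, r, s, hmn, hn, h⟩ := exists_isClosestPair_ge hα m
  have hr := h.left_mem.1
  have hs := h.right_mem.1
  have hne : ∀ j k : ℕ, 1 ≤ j → orbitPoint α j + orbitPoint α k ≠ 1 := fun j k hj =>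
    orbitPoint_add_ne_one hα (by omega)
  rcases (hne r s hr).lt_or_gt with hrs | hrs
  · by_cases hbal : s ≤ 2 * r
    · exact ⟨n, hmn, h.isBalancedReturn hα hn (Or.inr ⟨hrs, hbal⟩)⟩
    · refine ⟨n + s, by omega,
        (h.next_of_lt_one hα hn hrs).isBalancedReturn hα (by omega) ?_⟩
      rcases (hne (n + 1) s (by omega)).lt_or_gt with h' | h'
      · exact Or.inr ⟨h', by omega⟩
      · exact Or.inl ⟨h', by omega⟩
  · by_cases hbal : r ≤ 2 * s
    · exact ⟨n, hmn, h.isBalancedReturn hα hn (Or.inl ⟨hrs, hbal⟩)⟩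
    · refine ⟨n + r, by omega,
        (h.next_of_one_lt hα hn hrs).isBalancedReturn hα (by omega) ?_⟩
      rcases (hne r (n + 1) (by omega)).lt_or_gt with h' | h'
      · exact Or.inr ⟨h', by omega⟩
      · exact Or.inl ⟨h', by omega⟩

/-- **Lemma.** There is a strictly increasing sequence `(Nᵢ)` of integers such that each
`Nᵢ + 1` is a closest return time and, for every `i`, either `a_{Nᵢ} < b_{Nᵢ}` and
`r_{Nᵢ} ≤ 2 s_{Nᵢ}`, or `a_{Nᵢ} > b_{Nᵢ}` and `s_{Nᵢ} ≤ 2 r_{Nᵢ}`. -/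
theorem exists_balanced_return_sequence (α : ℝ) (hα : Irrational α) :
    ∃ N : ℕ → ℕ, StrictMono N ∧ ∀ i : ℕ, 1 ≤ N i ∧ IsClosestReturn α (N i) ∧
      ∀ r s : ℕ, IsRIndex α (N i) r → IsSIndex α (N i) s →
        (aseq α (N i) < bseq α (N i) ∧ r ≤ 2 * s) ∨
        (bseq α (N i) < aseq α (N i) ∧ s ≤ 2 * r) :=
  extraction_of_frequently_atTop (frequently_atTop.2 (exists_isBalancedReturn_ge hα))
end

section
/- Let α be irrational and let (N_i) be a strictly increasing sequence of integers such that each N_i + 1 is a closest return time (i.e. (N_i + 1)α ∈ [−a_{N_i}, b_{N_i}] mod 1) and, for every i, either a_{N_i} < b_{N_i} and r_{N_i} ≤ 2 s_{N_i}, or a_{N_i} > b_{N_i} and s_{N_i} ≤ 2 r_{N_i}. Then for every i: either a_{N_i} < b_{N_i} and ⌊r_{N_i}/4⌋ − 1 ≤ w(N_i), or a_{N_i} > b_{N_i} and ⌊s_{N_i}/4⌋ − 1 ≤ w(N_i), where ⌊·⌋ denotes the integer part. -/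
open Set Filter

/-! Since `n + 1` is a closest return time, `n + 1 = r + s`; hence `J_n = R_α^{-1}(I_n)` and
all the intervals in question are the translates `I_n + cα`, `-w - 1 ≤ c ≤ w`, of the arc
`I_n = (rα, sα)` of length `a + b`. They are pairwise disjoint as soon as `cα` stays at
distance `≥ a + b` from `ℤ` for `0 < |c| ≤ 2w + 1`. For `0 < c < s` with `c + s ≤ n` this
holds, because otherwise `(s - c)α` or `(c + s)α` would be an orbit point strictly between `-a`
and `b`; when `r ≤ 2s` this covers `c ≤ 2(⌊r/4⌋ - 1) + 1`. The case `s ≤ 2r` is the mirror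
image under `α ↦ -α`, which exchanges `a` with `b` and `r` with `s`. -/

section Fract

variable {R : Type*} [CommRing R] [LinearOrder R] [IsStrictOrderedRing R] [FloorRing R] {x y : R}

theorem Int.fract_sub_of_le_s15 (h : Int.fract y ≤ Int.fract x) :
    Int.fract (x - y) = Int.fract x - Int.fract y :=
  Int.fract_eq_iff.2 ⟨sub_nonneg.2 h, by linarith [Int.fract_lt_one x, Int.fract_nonneg y],
    ⌊x⌋ - ⌊y⌋, by push_cast; rw [Int.fract, Int.fract]; ring⟩

theorem Int.fract_sub_of_lt_s15 (h : Int.fract x < Int.fract y) :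
    Int.fract (x - y) = Int.fract x - Int.fract y + 1 :=
  Int.fract_eq_iff.2 ⟨by linarith [Int.fract_lt_one y, Int.fract_nonneg x], by linarith,
    ⌊x⌋ - ⌊y⌋ - 1, by push_cast; rw [Int.fract, Int.fract]; ring⟩

theorem Int.fract_add_of_lt_one (h : Int.fract x + Int.fract y < 1) :
    Int.fract (x + y) = Int.fract x + Int.fract y :=
  Int.fract_eq_iff.2 ⟨by linarith [Int.fract_nonneg x, Int.fract_nonneg y], h,
    ⌊x⌋ + ⌊y⌋, by push_cast; rw [Int.fract, Int.fract]; ring⟩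

theorem Int.fract_add_of_one_le (h : 1 ≤ Int.fract x + Int.fract y) :
    Int.fract (x + y) = Int.fract x + Int.fract y - 1 :=
  Int.fract_eq_iff.2 ⟨by linarith, by linarith [Int.fract_lt_one x, Int.fract_lt_one y],
    ⌊x⌋ + ⌊y⌋ + 1, by push_cast; rw [Int.fract, Int.fract]; ring⟩

def FarFromInt (L x : R) : Prop :=
  L ≤ Int.fract x ∧ Int.fract x ≤ 1 - L

theorem FarFromInt.neg {L : R} (h : FarFromInt L x) : FarFromInt L (-x) := by
  by_cases hx : Int.fract x = 0
  · rwa [FarFromInt, Int.fract_neg_eq_zero.2 hx, ← hx]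
  · rw [FarFromInt, Int.fract_neg hx]
    exact ⟨by linarith [h.2], by linarith [h.1]⟩

end Fract

theorem disjoint_arcSet {u v u' v' : ℝ} (hlen : v' - u' = v - u)
    (hfar : FarFromInt (Int.fract (v - u)) (u' - u)) :
    Disjoint (arcSet u v) (arcSet u' v') := by
  rw [Set.disjoint_left]
  rintro z ⟨hz, hzL⟩ ⟨-, hzL'⟩
  have hsub : Int.fract (z - u') = Int.fract (z - u) - Int.fract (u' - u) + 1 := by
    rw [show z - u' = (z - u) - (u' - u) by ring]
    exact Int.fract_sub_of_lt_s15 (by linarith [hfar.1])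
  rw [hlen] at hzL'
  linarith [hfar.2]

theorem wanderDisjoint_of_farFromInt {α : ℝ} {n r s : ℕ} {w : ℤ} (hn : n + 1 = r + s)
    (hfar : ∀ c : ℤ, 1 ≤ c → c ≤ 2 * w + 1 →
      FarFromInt (Int.fract (s * α - r * α)) (c * α)) :
    WanderDisjoint α n r s w := by
  have hfar' : ∀ c : ℤ, c ≠ 0 → -(2 * w + 1) ≤ c → c ≤ 2 * w + 1 →
      FarFromInt (Int.fract (s * α - r * α)) (c * α) := by
    intro c hc hlo hhi
    rcases hc.lt_or_gt with hneg | hpos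
    · simpa using (hfar (-c) (by omega) (by omega)).neg
    · exact hfar c hpos hhi
  have hnR : (n : ℝ) = r + s - 1 := by
    rw [eq_sub_iff_add_eq]; exact_mod_cast hn
  intro k l hk hkw hl hlw
  refine ⟨fun hkl => disjoint_arcSet (by ring) ?_, fun hkl => disjoint_arcSet (by ring) ?_,
    disjoint_arcSet (by ring) ?_⟩
  · convert hfar' (l - k) (by omega) (by omega) (by omega) using 2 <;> push_cast <;> ring
  · convert hfar' (k - l) (by omega) (by omega) (by omega) using 2 <;> push_cast <;> ring
  · convert hfar' (-(1 + k + l)) (by omega) (by omega) (by omega) using 2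
    · ring
    · push_cast; rw [hnR]; ring

theorem Irrational.fract_intCast_mul_ne_zero {α : ℝ} (hα : Irrational α) {k : ℤ}
    (hk : k ≠ 0) :
    Int.fract (k * α) ≠ 0 := by
  rw [Ne, Int.fract, sub_eq_zero]
  exact (hα.intCast_mul hk).ne_int _

theorem Irrational.injective_fract_intCast_mul {α : ℝ} (hα : Irrational α) :
    Function.Injective fun k : ℤ => Int.fract (k * α) := by
  intro i j hij
  obtain ⟨z, hz⟩ := Int.fract_eq_fract.1 hij
  by_contra hne
  refine (hα.intCast_mul (sub_ne_zero.2 hne)).ne_int z ?_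
  push_cast
  linarith

structure NeighborsOfZero (α : ℝ) (n r s : ℕ) (a b : ℝ) : Prop where
  one_le_r : 1 ≤ r
  r_le : r ≤ n
  one_le_s : 1 ≤ s
  s_le : s ≤ n
  fract_r : Int.fract (r * α) = 1 - a
  fract_s : Int.fract (s * α) = b
  le_fract : ∀ k : ℤ, 1 ≤ k → k ≤ n → b ≤ Int.fract (k * α)
  fract_le : ∀ k : ℤ, 1 ≤ k → k ≤ n → Int.fract (k * α) ≤ 1 - a

theorem neighborsOfZero_of_isRIndex_of_isSIndex {α : ℝ} {n r s : ℕ} (hr : IsRIndex α n r)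
    (hs : IsSIndex α n s) : NeighborsOfZero α n r s (aseq α n) (bseq α n) := by
  obtain ⟨hr1, hrn, hrα⟩ := hr
  obtain ⟨hs1, hsn, hsα⟩ := hs
  refine ⟨hr1, hrn, hs1, hsn, hrα, hsα, fun k hk1 hkn => ?_, fun k hk1 hkn => ?_⟩ <;>
    lift k to ℕ using (by omega) <;> rw [Int.cast_natCast]
  · exact csInf_le ⟨0, by rintro t ⟨j, -, -, rfl⟩; exact Int.fract_nonneg _⟩
      ⟨k, by omega, by omega, rfl⟩
  · rw [aseq, sub_sub_cancel]
    exact le_csSup ⟨1, by rintro t ⟨j, -, -, rfl⟩; exact (Int.fract_lt_one _).le⟩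
      ⟨k, by omega, by omega, rfl⟩

namespace NeighborsOfZero

variable {α a b : ℝ} {n r s : ℕ}

theorem neg (hα : Irrational α) (h : NeighborsOfZero α n r s a b) :
    NeighborsOfZero (-α) n s r b a := by
  have hneg : ∀ k : ℤ, 1 ≤ k → Int.fract (k * -α) = 1 - Int.fract (k * α) := by
    intro k hk
    rw [mul_neg, Int.fract_neg (hα.fract_intCast_mul_ne_zero (by omega))]
  refine ⟨h.one_le_s, h.s_le, h.one_le_r, h.r_le, ?_, ?_, fun k hk1 hkn => ?_,
    fun k hk1 hkn => ?_⟩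
  · rw [← h.fract_s]; exact_mod_cast hneg s (by exact_mod_cast h.one_le_s)
  · rw [← sub_sub_cancel 1 a, ← h.fract_r]
    exact_mod_cast hneg r (by exact_mod_cast h.one_le_r)
  · rw [hneg k hk1]; linarith [h.fract_le k hk1 hkn]
  · rw [hneg k hk1]; linarith [h.le_fract k hk1 hkn]

theorem a_pos (h : NeighborsOfZero α n r s a b) : 0 < a := by
  linarith [Int.fract_lt_one (r * α), h.fract_r]

theorem b_pos (hα : Irrational α) (h : NeighborsOfZero α n r s a b) : 0 < b := by
  rw [← h.fract_s]
  refine (Int.fract_nonneg _).lt_of_ne (Ne.symm ?_)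
  exact_mod_cast hα.fract_intCast_mul_ne_zero (k := s) (by have := h.one_le_s; omega)

theorem lt_fract (hα : Irrational α) (h : NeighborsOfZero α n r s a b) {k : ℤ} (hk1 : 1 ≤ k)
    (hkn : k ≤ n) (hks : k ≠ s) : b < Int.fract (k * α) := by
  refine (h.le_fract k hk1 hkn).lt_of_ne fun hb => hks (hα.injective_fract_intCast_mul ?_)
  simpa [← hb] using h.fract_s.symm

theorem fract_lt (hα : Irrational α) (h : NeighborsOfZero α n r s a b) {k : ℤ} (hk1 : 1 ≤ k)
    (hkn : k ≤ n) (hkr : k ≠ r) : Int.fract (k * α) < 1 - a := by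
  refine (h.fract_le k hk1 hkn).lt_of_ne fun ha => hkr (hα.injective_fract_intCast_mul ?_)
  simpa [ha] using h.fract_r.symm

theorem add_lt_one (hα : Irrational α) (h : NeighborsOfZero α n r s a b) (hn : 2 ≤ n) :
    a + b < 1 := by
  obtain ⟨k, hk1, hkn, hks⟩ : ∃ k : ℤ, 1 ≤ k ∧ k ≤ n ∧ k ≠ s := by
    rcases eq_or_ne s 1 with hs | hs
    · exact ⟨2, by omega, by omega, by omega⟩
    · exact ⟨1, le_rfl, by omega, by omega⟩
  linarith [h.lt_fract hα hk1 hkn hks, h.fract_le k hk1 hkn]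

theorem fract_sub_eq (h : NeighborsOfZero α n r s a b) (hab : a + b < 1) :
    Int.fract (s * α - r * α) = a + b := by
  rw [Int.fract_sub_of_lt_s15 (by rw [h.fract_s, h.fract_r]; linarith), h.fract_s, h.fract_r]
  ring

theorem lt_add (hα : Irrational α) (h : NeighborsOfZero α n r s a b) : n < r + s := by
  by_contra! hle
  have hlo := h.le_fract (r + s) (by have := h.one_le_r; omega) (by omega)
  have hhi := h.fract_le (r + s) (by have := h.one_le_r; omega) (by omega)
  push_cast [add_mul] at hlo hhi
  rcases lt_or_ge (Int.fract (r * α) + Int.fract (s * α)) 1 with hlt | hge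
  · rw [Int.fract_add_of_lt_one hlt, h.fract_r, h.fract_s] at hhi
    linarith [h.b_pos hα]
  · rw [Int.fract_add_of_one_le hge, h.fract_r, h.fract_s] at hlo
    linarith [h.a_pos]

/-- With `x = (n+1)α ∈ [0, b)`, the orbit point `(n+1-s)α = x - b` lies in `[-b, 0)`; if
`r + s > n + 1` it is not `rα = -a`, so `(r - (n+1-s))α` lands in `(0, b)`. -/
theorem add_le_succ_of_fract_le (hα : Irrational α) (h : NeighborsOfZero α n r s a b)
    (hc : Int.fract (((n : ℝ) + 1) * α) ≤ b) : r + s ≤ n + 1 := by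
  by_contra! hlt
  have hr1 := h.one_le_r
  have hs1 := h.one_le_s
  have hsn := h.s_le
  have hrn := h.r_le
  set x := Int.fract (((n : ℝ) + 1) * α)
  have hxb : x < b := hc.lt_of_ne fun heq => by
    have := hα.injective_fract_intCast_mul (a₁ := n + 1) (a₂ := s) (by
      push_cast; rw [h.fract_s]; exact heq)
    omega
  have hd : Int.fract (((n + 1 - s : ℤ) : ℝ) * α) = x - b + 1 := by
    rw [show ((n + 1 - s : ℤ) : ℝ) * α = ((n : ℝ) + 1) * α - s * α by push_cast; ring,
      Int.fract_sub_of_lt_s15 (by rwa [h.fract_s]), h.fract_s]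
  have hdr := h.fract_lt hα (k := n + 1 - s) (by omega) (by omega) (by omega)
  have hrd := h.le_fract (r - (n + 1 - s)) (by omega) (by omega)
  rw [show ((r - (n + 1 - s) : ℤ) : ℝ) * α = r * α - ((n + 1 - s : ℤ) : ℝ) * α by
      push_cast; ring,
    Int.fract_sub_of_le_s15 (by rw [h.fract_r]; exact hdr.le), h.fract_r, hd] at hrd
  linarith [h.a_pos, Int.fract_nonneg (((n : ℝ) + 1) * α)]

theorem add_eq_succ (hα : Irrational α) (h : NeighborsOfZero α n r s a b)
    (hcr : Int.fract (((n : ℝ) + 1) * α) ≤ b ∨ 1 - a ≤ Int.fract (((n : ℝ) + 1) * α)) :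
    n + 1 = r + s := by
  refine le_antisymm (h.lt_add hα) ?_
  rcases hcr with hc | hc
  · exact h.add_le_succ_of_fract_le hα hc
  · have hne : Int.fract (((n : ℝ) + 1) * α) ≠ 0 := by
      exact_mod_cast hα.fract_intCast_mul_ne_zero (k := n + 1) (by omega)
    have := (h.neg hα).add_le_succ_of_fract_le hα.neg (by
      rw [mul_neg, Int.fract_neg hne]; linarith)
    omega

theorem farFromInt_of_lt_s (hα : Irrational α) (h : NeighborsOfZero α n r s a b) {m : ℤ}
    (hm : 1 ≤ m) (hms : m < s) (hmn : m + s ≤ n) : FarFromInt (a + b) (m * α) := by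
  constructor
  · by_contra! hlt
    have hbm := h.lt_fract hα hm (by omega) hms.ne
    have := h.fract_le (s - m) (by omega) (by omega)
    rw [show ((s - m : ℤ) : ℝ) * α = s * α - m * α by push_cast; ring,
      Int.fract_sub_of_lt_s15 (by rwa [h.fract_s]), h.fract_s] at this
    linarith
  · by_contra! hgt
    have hlo := h.le_fract (m + s) (by omega) hmn
    have hhi := h.fract_le (m + s) (by omega) hmn
    push_cast [add_mul] at hlo hhi
    rcases lt_or_ge (Int.fract (m * α) + Int.fract (s * α)) 1 with hlt | hge
    · rw [Int.fract_add_of_lt_one hlt, h.fract_s] at hhi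
      linarith
    · rw [Int.fract_add_of_one_le hge, h.fract_s] at hlo
      linarith [h.fract_le m hm (by omega), h.a_pos]

theorem farFromInt_of_lt_r (hα : Irrational α) (h : NeighborsOfZero α n r s a b) {m : ℤ}
    (hm : 1 ≤ m) (hmr : m < r) (hmn : m + r ≤ n) : FarFromInt (a + b) (m * α) := by
  have := ((h.neg hα).farFromInt_of_lt_s hα.neg hm hmr hmn).neg
  rwa [add_comm, mul_neg, neg_neg] at this

theorem wanderDisjoint_of_le_two_mul_s (hα : Irrational α) (h : NeighborsOfZero α n r s a b)
    (hn : n + 1 = r + s) (hrs : r ≤ 2 * s) : WanderDisjoint α n r s (r / 4 - 1) := by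
  refine wanderDisjoint_of_farFromInt hn fun c hc1 hcw => ?_
  rw [h.fract_sub_eq (h.add_lt_one hα (by omega))]
  exact h.farFromInt_of_lt_s hα hc1 (by omega) (by omega)

theorem wanderDisjoint_of_le_two_mul_r (hα : Irrational α) (h : NeighborsOfZero α n r s a b)
    (hn : n + 1 = r + s) (hsr : s ≤ 2 * r) : WanderDisjoint α n r s (s / 4 - 1) := by
  refine wanderDisjoint_of_farFromInt hn fun c hc1 hcw => ?_
  rw [h.fract_sub_eq (h.add_lt_one hα (by omega))]
  exact h.farFromInt_of_lt_r hα hc1 (by omega) (by omega)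

end NeighborsOfZero

theorem wandering_time_lower_bound_general (α : ℝ) (hα : Irrational α)
    (N : ℕ → ℕ)
    (hN : ∀ i : ℕ, 1 ≤ N i ∧ IsClosestReturn α (N i) ∧
      ∀ r s : ℕ, IsRIndex α (N i) r → IsSIndex α (N i) s →
        (aseq α (N i) < bseq α (N i) ∧ r ≤ 2 * s) ∨
        (bseq α (N i) < aseq α (N i) ∧ s ≤ 2 * r)) :
    ∀ i : ℕ, ∀ r s : ℕ, IsRIndex α (N i) r → IsSIndex α (N i) s →
      ∀ w : ℤ, IsWanderingTime α (N i) r s w →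
        (aseq α (N i) < bseq α (N i) ∧ (r : ℤ) / 4 - 1 ≤ w) ∨
        (bseq α (N i) < aseq α (N i) ∧ (s : ℤ) / 4 - 1 ≤ w) := by
  intro i r s hr hs w hw
  obtain ⟨-, hcr, hcases⟩ := hN i
  have h := neighborsOfZero_of_isRIndex_of_isSIndex hr hs
  have hn := h.add_eq_succ hα hcr
  rcases hcases r s hr hs with ⟨hab, hrs⟩ | ⟨hba, hsr⟩
  · exact Or.inl ⟨hab, hw.2 _ (h.wanderDisjoint_of_le_two_mul_s hα hn hrs)⟩
  · exact Or.inr ⟨hba, hw.2 _ (h.wanderDisjoint_of_le_two_mul_r hα hn hsr)⟩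

/-- **Corollary.** If `(Nᵢ)` is a strictly increasing sequence of integers such that each
`Nᵢ + 1` is a closest return time and, for every `i`, either `a_{Nᵢ} < b_{Nᵢ}` with
`r_{Nᵢ} ≤ 2 s_{Nᵢ}`, or `a_{Nᵢ} > b_{Nᵢ}` with `s_{Nᵢ} ≤ 2 r_{Nᵢ}`, then for every `i`
either `a_{Nᵢ} < b_{Nᵢ}` and `⌊r_{Nᵢ}/4⌋ - 1 ≤ w(Nᵢ)`, or `a_{Nᵢ} > b_{Nᵢ}` and
`⌊s_{Nᵢ}/4⌋ - 1 ≤ w(Nᵢ)`. -/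
theorem wandering_time_lower_bound (α : ℝ) (hα : Irrational α)
    (N : ℕ → ℕ) (hmono : StrictMono N)
    (hN : ∀ i : ℕ, 1 ≤ N i ∧ IsClosestReturn α (N i) ∧
      ∀ r s : ℕ, IsRIndex α (N i) r → IsSIndex α (N i) s →
        (aseq α (N i) < bseq α (N i) ∧ r ≤ 2 * s) ∨
        (bseq α (N i) < aseq α (N i) ∧ s ≤ 2 * r)) :
    ∀ i : ℕ, ∀ r s : ℕ, IsRIndex α (N i) r → IsSIndex α (N i) s →
      ∀ w : ℤ, IsWanderingTime α (N i) r s w →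
        (aseq α (N i) < bseq α (N i) ∧ (r : ℤ) / 4 - 1 ≤ w) ∨
        (bseq α (N i) < aseq α (N i) ∧ (s : ℤ) / 4 - 1 ≤ w) :=
  wandering_time_lower_bound_general α hα N hN
end
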